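/- arXiv:2309.02829 — 10 statements merged into one kernel-verified Lean document; each statement's English description precedes it below -/
import Mathlib

section
/- Let P be a Markov kernel on a measurable space E and g : E → ℝ bounded measurable. Suppose (w, λ) is a bounded MPE solution for g. Then for every n ≥ 1 and every x ∈ E one has |λ − (1/n)·(T^n 0)(x)| ≤ 2‖w‖/n, where T^n 0 denotes the n-th iterate of the MPE operator T applied to the zero function. In particular sup_{x∈E} |λ − (1/n)(T^n 0)(x)| → 0 as n → ∞. -/
open MeasureTheory ProbabilityTheory Filter

/-- The multiplicative Poisson equation (MPE) operator
`(T f)(x) = g(x) + log ∫ exp (f y) P(x, dy)`. -/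
noncomputable def mpeOp {E : Type*} [MeasurableSpace E] (P : Kernel E E) (g : E → ℝ)
    (f : E → ℝ) : E → ℝ :=
  fun x => g x + Real.log (∫ y, Real.exp (f y) ∂(P x))

/-- If `(w, lam)` is a bounded MPE solution for a bounded measurable reward `g`, then for
every `n ≥ 1` and every `x`, `|lam - (1/n)·(Tⁿ 0)(x)| ≤ 2‖w‖/n`, and the supremum over `x`
of these quantities tends to `0` as `n → ∞`. -/
theorem mpe_solution_gives_longrun_value {E : Type*} [MeasurableSpace E]
    (P : Kernel E E) [IsMarkovKernel P]
    (g : E → ℝ) (hg_meas : Measurable g) (Cg : ℝ) (hg_bdd : ∀ x, |g x| ≤ Cg)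
    (w : E → ℝ) (hw_meas : Measurable w) (Cw : ℝ) (hw_bdd : ∀ x, |w x| ≤ Cw)
    (lam : ℝ)
    (hMPE : ∀ x, w x = g x - lam + Real.log (∫ y, Real.exp (w y) ∂(P x))) :
    (∀ n : ℕ, 1 ≤ n → ∀ x : E,
        |lam - (1 / (n : ℝ)) * ((mpeOp P g)^[n] (fun _ => 0)) x|
          ≤ 2 * (⨆ x, |w x|) / (n : ℝ)) ∧
      Tendsto
        (fun n : ℕ => ⨆ x : E, |lam - (1 / (n : ℝ)) * ((mpeOp P g)^[n] (fun _ => 0)) x|)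
        atTop (nhds 0) := by
  set M : ℝ := ⨆ x, |w x| with hMdef
  have hbdd : BddAbove (Set.range fun x => |w x|) :=
    ⟨Cw, by rintro _ ⟨x, rfl⟩; exact hw_bdd x⟩
  have hwM : ∀ x, |w x| ≤ M := fun x => le_ciSup hbdd x
  have hM0 : 0 ≤ M := Real.iSup_nonneg fun x => abs_nonneg _
  -- integrability of a bounded measurable function against a Markov kernel
  have hint : ∀ (f : E → ℝ) (C : ℝ), Measurable f → (∀ y, |f y| ≤ C) → ∀ x : E,
      Integrable (fun y => Real.exp (f y)) (P x) := by
    intro f C hf hC x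
    refine ⟨(Real.measurable_exp.comp hf).aestronglyMeasurable, ?_⟩
    refine HasFiniteIntegral.of_bounded (C := Real.exp C) (ae_of_all _ fun y => ?_)
    rw [Real.norm_eq_abs, abs_of_pos (Real.exp_pos _)]
    exact Real.exp_le_exp.2 (le_of_abs_le (hC y))
  have hintw : ∀ x : E, Integrable (fun y => Real.exp (w y)) (P x) :=
    hint w Cw hw_meas hw_bdd
  -- positivity of ∫ exp w
  have hIpos : ∀ x : E, 0 < ∫ y, Real.exp (w y) ∂(P x) := by
    intro x
    have h1 : (Real.exp (-Cw)) ≤ ∫ y, Real.exp (w y) ∂(P x) := by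
      have := integral_mono (integrable_const (Real.exp (-Cw))) (hintw x)
        (fun y => Real.exp_le_exp.2 (neg_le_of_abs_le (hw_bdd y)))
      simpa using this
    exact lt_of_lt_of_le (Real.exp_pos _) h1
  -- the key induction
  have key : ∀ n : ℕ, Measurable ((mpeOp P g)^[n] (fun _ => 0)) ∧
      ∀ x, |((mpeOp P g)^[n] (fun _ => 0)) x - ((n : ℝ) * lam + w x)| ≤ M := by
    intro n
    induction n with
    | zero =>
      refine ⟨measurable_const, fun x => ?_⟩
      simpa using hwM x
    | succ n ih =>
      obtain ⟨hm, hb⟩ := ih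
      set h : E → ℝ := (mpeOp P g)^[n] (fun _ => 0) with hh
      have hB : ∀ y, |h y| ≤ (n : ℝ) * |lam| + Cw + M := by
        intro y
        calc |h y| = |(h y - ((n : ℝ) * lam + w y)) + ((n : ℝ) * lam + w y)| := by ring_nf
        _ ≤ |h y - ((n : ℝ) * lam + w y)| + |(n : ℝ) * lam + w y| := abs_add_le _ _
        _ ≤ M + ((n : ℝ) * |lam| + Cw) := by
            refine add_le_add (hb y) ((abs_add_le _ _).trans (add_le_add ?_ (hw_bdd y)))
            rw [abs_mul, Nat.abs_cast]
        _ = (n : ℝ) * |lam| + Cw + M := by ring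
      have hinth : ∀ x : E, Integrable (fun y => Real.exp (h y)) (P x) :=
        hint h _ hm hB
      -- upper and lower comparisons of the integral
      have hup : ∀ x : E, ∫ y, Real.exp (h y) ∂(P x)
          ≤ Real.exp ((n : ℝ) * lam + M) * ∫ y, Real.exp (w y) ∂(P x) := by
        intro x
        rw [← MeasureTheory.integral_const_mul]
        refine integral_mono (hinth x) ((hintw x).const_mul _) fun y => ?_
        rw [← Real.exp_add]
        refine Real.exp_le_exp.2 ?_
        have := (abs_le.1 (hb y)).2
        linarith
      have hlo : ∀ x : E, Real.exp ((n : ℝ) * lam - M) * ∫ y, Real.exp (w y) ∂(P x)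
          ≤ ∫ y, Real.exp (h y) ∂(P x) := by
        intro x
        rw [← MeasureTheory.integral_const_mul]
        refine integral_mono ((hintw x).const_mul _) (hinth x) fun y => ?_
        rw [← Real.exp_add]
        refine Real.exp_le_exp.2 ?_
        have := (abs_le.1 (hb y)).1
        linarith
      have hhpos : ∀ x : E, 0 < ∫ y, Real.exp (h y) ∂(P x) := fun x =>
        lt_of_lt_of_le (mul_pos (Real.exp_pos _) (hIpos x)) (hlo x)
      constructor
      · rw [Function.iterate_succ_apply']
        refine hg_meas.add (Real.measurable_log.comp ?_)
        have : StronglyMeasurable fun p : E × E => Real.exp (h p.2) :=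
          ((Real.measurable_exp.comp hm).comp measurable_snd).stronglyMeasurable
        exact (MeasureTheory.StronglyMeasurable.integral_kernel_prod_right' this).measurable
      · intro x
        rw [Function.iterate_succ_apply']
        have hlogI : Real.log (∫ y, Real.exp (w y) ∂(P x)) = w x + lam - g x := by
          have := hMPE x; linarith
        have hup' : Real.log (∫ y, Real.exp (h y) ∂(P x))
            ≤ (n : ℝ) * lam + M + (w x + lam - g x) := by
          calc Real.log (∫ y, Real.exp (h y) ∂(P x))
              ≤ Real.log (Real.exp ((n : ℝ) * lam + M) * ∫ y, Real.exp (w y) ∂(P x)) :=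
                Real.log_le_log (hhpos x) (hup x)
            _ = (n : ℝ) * lam + M + (w x + lam - g x) := by
                rw [Real.log_mul (Real.exp_ne_zero _) (hIpos x).ne', Real.log_exp, hlogI]
        have hlo' : (n : ℝ) * lam - M + (w x + lam - g x)
            ≤ Real.log (∫ y, Real.exp (h y) ∂(P x)) := by
          calc (n : ℝ) * lam - M + (w x + lam - g x)
              = Real.log (Real.exp ((n : ℝ) * lam - M) * ∫ y, Real.exp (w y) ∂(P x)) := by
                rw [Real.log_mul (Real.exp_ne_zero _) (hIpos x).ne', Real.log_exp, hlogI]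
            _ ≤ Real.log (∫ y, Real.exp (h y) ∂(P x)) :=
                Real.log_le_log (mul_pos (Real.exp_pos _) (hIpos x)) (hlo x)
        rw [abs_le]
        simp only [mpeOp, Nat.cast_succ]
        constructor <;> [nlinarith [hlo']; nlinarith [hup']]
  have main : ∀ n : ℕ, 1 ≤ n → ∀ x : E,
      |lam - (1 / (n : ℝ)) * ((mpeOp P g)^[n] (fun _ => 0)) x| ≤ 2 * M / (n : ℝ) := by
    intro n hn x
    have hn0 : (0 : ℝ) < (n : ℝ) := by exact_mod_cast hn
    have hb := (key n).2 x
    set hnx : ℝ := ((mpeOp P g)^[n] (fun _ => 0)) x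
    have h1 : |(n : ℝ) * lam - hnx| ≤ 2 * M := by
      have h2 : |hnx - ((n : ℝ) * lam + w x)| ≤ M := hb
      have h3 := hwM x
      have := abs_le.1 h2
      rw [abs_le]
      constructor <;> [nlinarith [abs_le.1 h3]; nlinarith [abs_le.1 h3]]
    have heq : lam - (1 / (n : ℝ)) * hnx = (1 / (n : ℝ)) * ((n : ℝ) * lam - hnx) := by
      field_simp
    rw [heq, abs_mul, abs_of_pos (by positivity : (0:ℝ) < 1 / (n : ℝ))]
    calc (1 / (n : ℝ)) * |(n : ℝ) * lam - hnx| ≤ (1 / (n : ℝ)) * (2 * M) :=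
          mul_le_mul_of_nonneg_left h1 (by positivity)
      _ = 2 * M / (n : ℝ) := by ring
  refine ⟨main, ?_⟩
  have h0 : Tendsto (fun n : ℕ => 2 * M / (n : ℝ)) atTop (nhds 0) :=
    tendsto_const_div_atTop_nhds_zero_nat (2 * M)
  refine squeeze_zero' ?_ ?_ h0
  · exact Eventually.of_forall fun n => Real.iSup_nonneg fun x => abs_nonneg _
  · filter_upwards [eventually_ge_atTop 1] with n hn
    refine Real.iSup_le (fun x => main n hn x) ?_
    have hn0 : (0 : ℝ) < (n : ℝ) := by exact_mod_cast hn
    positivity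
end

section
/- Let P be a Markov kernel on a measurable space E satisfying the mixing condition (A.1) with Λ ∈ (0,1), and let g : E → ℝ be bounded measurable. For every M > 0 there exists α ∈ (0,1), depending only on P and M (in particular not on g), such that for all bounded measurable f₁, f₂ : E → ℝ with ‖f₁‖_sp ≤ M and ‖f₂‖_sp ≤ M one has ‖Tf₁ − Tf₂‖_sp ≤ α · ‖f₁ − f₂‖_sp, i.e. the MPE operator T is a local contraction in the span seminorm. -/
/-!
Write `Z_μ f = ∫ exp f dμ` and `μ^f = μ.tilted f` (density `exp f / Z_μ f`). Convexity of
`f ↦ log Z_μ f` (Jensen for `exp` under `μ^f`) gives `∫ (f' - f) dμ^f ≤ log Z_μ f' - log Z_μ f`, so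
with `h = f₁ - f₂` the difference `D x = (T f₁ - T f₂) x` is squeezed between `∫ h d(P x)^f₂` and
`∫ h d(P x)^f₁`. A span at most `M` makes the density of `μ^f` at least `ε = exp (-2M)`, i.e.
`ε • μ ≤ μ^f`, hence `ε ∫ h dμ + (1 - ε) inf h ≤ ∫ h dμ^f ≤ ε ∫ h dμ + (1 - ε) sup h`. Comparing two
points `x, x'`, only `ε (∫ h d(P x) - ∫ h d(P x'))` is left, which the mixing condition (through a
Hahn decomposition of `P x - P x'`) bounds by `ε Λ (sup h - inf h)`; so the oscillation of `D` is
at most `(1 - ε (1 - Λ)) (sup h - inf h)`.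
-/

open MeasureTheory ProbabilityTheory

/-- The span seminorm `‖f‖_sp = (sup f - inf f)/2`. -/
noncomputable def spanSeminorm {E : Type*} (f : E → ℝ) : ℝ :=
  ((⨆ x, f x) - ⨅ x, f x) / 2

open Real Set

section SpanSeminorm

variable {ι : Type*} {u : ι → ℝ}

lemma bddAbove_range_of_abs_le {C : ℝ} (hC : ∀ i, |u i| ≤ C) : BddAbove (range u) :=
  ⟨C, forall_mem_range.2 fun i => le_of_abs_le (hC i)⟩

lemma bddBelow_range_of_abs_le {C : ℝ} (hC : ∀ i, |u i| ≤ C) : BddBelow (range u) :=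
  ⟨-C, forall_mem_range.2 fun i => neg_le_of_abs_le (hC i)⟩

lemma sub_le_two_mul_spanSeminorm {C : ℝ} (hC : ∀ i, |u i| ≤ C) (i j : ι) :
    u i - u j ≤ 2 * spanSeminorm u := by
  have := le_ciSup (bddAbove_range_of_abs_le hC) i
  have := ciInf_le (bddBelow_range_of_abs_le hC) j
  unfold spanSeminorm
  linarith

lemma spanSeminorm_le_of_forall_sub_le [Nonempty ι] {c : ℝ} (h : ∀ i j, u i - u j ≤ c) :
    spanSeminorm u ≤ c / 2 := by
  have hsup : ⨆ i, u i ≤ c + ⨅ j, u j :=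
    ciSup_le fun i => by linarith [le_ciInf fun j => show u i - c ≤ u j by linarith [h i j]]
  unfold spanSeminorm
  linarith

end SpanSeminorm

namespace MeasureTheory

variable {α : Type*} [MeasurableSpace α] {μ : Measure α}

lemma integrable_of_forall_abs_le [IsFiniteMeasure μ] {f : α → ℝ} (hf : Measurable f) {C : ℝ}
    (hC : ∀ y, |f y| ≤ C) : Integrable f μ :=
  .of_bound hf.aestronglyMeasurable C (ae_of_all _ hC)

lemma integrable_exp_of_forall_abs_le [IsFiniteMeasure μ] {f : α → ℝ} (hf : Measurable f)
    {C : ℝ} (hC : ∀ y, |f y| ≤ C) : Integrable (fun y => exp (f y)) μ :=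
  integrable_of_forall_abs_le hf.exp fun y => by
    rw [abs_exp]; exact exp_le_exp.2 (le_of_abs_le (hC y))

section OrderedMeasures

variable {ν ν' : Measure α} [IsFiniteMeasure ν'] {h : α → ℝ}

lemma integral_sub_integral_le_of_measure_le (hle : ν ≤ ν') (hh : Integrable h ν') {b : ℝ}
    (hb : ∀ y, h y ≤ b) :
    ∫ y, h y ∂ν' - ∫ y, h y ∂ν ≤ b * (ν'.real univ - ν.real univ) := by
  have : IsFiniteMeasure ν := isFiniteMeasure_of_le ν' hle
  have hmono : ∫ y, (b - h y) ∂ν ≤ ∫ y, (b - h y) ∂ν' :=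
    integral_mono_measure hle (ae_of_all _ fun y => sub_nonneg.2 (hb y))
      ((integrable_const b).sub hh)
  rw [integral_sub (integrable_const b) (hh.mono_measure hle), integral_sub (integrable_const b) hh,
    integral_const, integral_const, smul_eq_mul, smul_eq_mul] at hmono
  linarith

lemma le_integral_sub_integral_of_measure_le (hle : ν ≤ ν') (hh : Integrable h ν') {a : ℝ}
    (ha : ∀ y, a ≤ h y) :
    a * (ν'.real univ - ν.real univ) ≤ ∫ y, h y ∂ν' - ∫ y, h y ∂ν := by
  have := integral_sub_integral_le_of_measure_le (h := fun y => -h y) hle hh.neg (b := -a)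
    fun y => neg_le_neg (ha y)
  rw [integral_neg, integral_neg] at this
  linarith

end OrderedMeasures

lemma integral_sub_integral_le_mul_of_measureReal_sub_le {μ' : Measure α}
    [IsProbabilityMeasure μ] [IsProbabilityMeasure μ'] {Λ : ℝ}
    (hmix : ∀ B, MeasurableSet B → μ.real B - μ'.real B ≤ Λ) {h : α → ℝ}
    (hh : Integrable h μ) (hh' : Integrable h μ') {a b : ℝ} (ha : ∀ y, a ≤ h y)
    (hb : ∀ y, h y ≤ b) :
    ∫ y, h y ∂μ - ∫ y, h y ∂μ' ≤ Λ * (b - a) := by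
  have : Nonempty α := nonempty_of_isProbabilityMeasure μ
  have hab : 0 ≤ b - a := sub_nonneg.2 ((ha this.some).trans (hb _))
  -- Hahn decomposition: `μ' ≤ μ` on `s` and `μ ≤ μ'` on `sᶜ`.
  obtain ⟨s, hs, hle, hge⟩ := exists_isHahnDecomposition μ' μ
  have hon := integral_sub_integral_le_of_measure_le hle hh.restrict hb
  have hoff := le_integral_sub_integral_of_measure_le hge hh'.restrict ha
  simp only [measureReal_restrict_apply_univ, probReal_compl_eq_one_sub hs] at hon hoff
  rw [← integral_add_compl hs hh, ← integral_add_compl hs hh']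
  linarith [mul_le_mul_of_nonneg_left (hmix s hs) hab]

lemma ofReal_exp_neg_smul_le_tilted [IsProbabilityMeasure μ] {f : α → ℝ} (hf : Measurable f)
    {C : ℝ} (hC : ∀ y, |f y| ≤ C) {c : ℝ} (hosc : ∀ y z, f z ≤ f y + c) :
    ENNReal.ofReal (exp (-c)) • μ ≤ μ.tilted f := by
  have hZ : 0 < ∫ z, exp (f z) ∂μ := integral_exp_pos (integrable_exp_of_forall_abs_le hf hC)
  rw [← withDensity_const, Measure.tilted]
  refine withDensity_mono (ae_of_all _ fun y => ENNReal.ofReal_le_ofReal ?_)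
  rw [le_div_iff₀ hZ, ← le_div_iff₀' (exp_pos _), ← exp_sub, sub_neg_eq_add]
  calc ∫ z, exp (f z) ∂μ ≤ ∫ _, exp (f y + c) ∂μ :=
        integral_mono (integrable_exp_of_forall_abs_le hf hC) (integrable_const _)
          fun z => exp_le_exp.2 (hosc y z)
    _ = exp (f y + c) := by simp

lemma integral_sub_le_log_integral_exp_sub [IsProbabilityMeasure μ] {f f' : α → ℝ}
    (hf : Measurable f) (hf' : Measurable f') {C C' : ℝ} (hC : ∀ y, |f y| ≤ C)
    (hC' : ∀ y, |f' y| ≤ C') :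
    ∫ y, (f' y - f y) ∂μ.tilted f
      ≤ log (∫ y, exp (f' y) ∂μ) - log (∫ y, exp (f y) ∂μ) := by
  have hint := integrable_exp_of_forall_abs_le (μ := μ) hf hC
  have : IsProbabilityMeasure (μ.tilted f) := isProbabilityMeasure_tilted hint
  have hZ : 0 < ∫ y, exp (f y) ∂μ := integral_exp_pos hint
  have hψ : ∀ y, |f' y - f y| ≤ C' + C := fun y =>
    (abs_sub _ _).trans (add_le_add (hC' y) (hC y))
  have hZ' : 0 < ∫ y, exp (f' y) ∂μ := integral_exp_pos (integrable_exp_of_forall_abs_le hf' hC')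
  have hjensen : exp (∫ y, (f' y - f y) ∂μ.tilted f) ≤ ∫ y, exp (f' y - f y) ∂μ.tilted f :=
    convexOn_exp.map_integral_le continuousOn_exp isClosed_univ (ae_of_all _ fun _ => trivial)
      (integrable_of_forall_abs_le (hf'.sub hf) hψ)
      (integrable_exp_of_forall_abs_le (hf'.sub hf) hψ)
  have htilt : ∫ y, exp (f' y - f y) ∂μ.tilted f
      = (∫ y, exp (f' y) ∂μ) / ∫ y, exp (f y) ∂μ := by
    rw [integral_exp_tilted f (fun y => f' y - f y)]
    simp only [Pi.add_apply, add_sub_cancel]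
  calc ∫ y, (f' y - f y) ∂μ.tilted f = log (exp (∫ y, (f' y - f y) ∂μ.tilted f)) :=
        (log_exp _).symm
    _ ≤ log ((∫ y, exp (f' y) ∂μ) / ∫ y, exp (f y) ∂μ) :=
        htilt ▸ log_le_log (exp_pos _) hjensen
    _ = log (∫ y, exp (f' y) ∂μ) - log (∫ y, exp (f y) ∂μ) := log_div hZ'.ne' hZ.ne'

lemma log_integral_exp_sub_sub_le {μ' : Measure α} [IsProbabilityMeasure μ]
    [IsProbabilityMeasure μ'] {Λ : ℝ}
    (hmix : ∀ B, MeasurableSet B → μ.real B - μ'.real B ≤ Λ)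
    {f₁ f₂ : α → ℝ} (hf₁ : Measurable f₁) (hf₂ : Measurable f₂) {C₁ C₂ : ℝ}
    (hC₁ : ∀ y, |f₁ y| ≤ C₁) (hC₂ : ∀ y, |f₂ y| ≤ C₂) {M : ℝ} (hM₁ : spanSeminorm f₁ ≤ M)
    (hM₂ : spanSeminorm f₂ ≤ M) :
    (log (∫ y, exp (f₁ y) ∂μ) - log (∫ y, exp (f₂ y) ∂μ))
        - (log (∫ y, exp (f₁ y) ∂μ') - log (∫ y, exp (f₂ y) ∂μ'))
      ≤ (1 - exp (-(2 * M)) * (1 - Λ)) * (2 * spanSeminorm (fun y => f₁ y - f₂ y)) := by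
  set h : α → ℝ := fun y => f₁ y - f₂ y
  have hC : ∀ y, |h y| ≤ C₁ + C₂ := fun y => (abs_sub _ _).trans (add_le_add (hC₁ y) (hC₂ y))
  have hint : ∀ ν : Measure α, [IsFiniteMeasure ν] → Integrable h ν := fun ν _ =>
    integrable_of_forall_abs_le (hf₁.sub hf₂) hC
  have ha : ∀ y, ⨅ z, h z ≤ h y := ciInf_le (bddBelow_range_of_abs_le hC)
  have hb : ∀ y, h y ≤ ⨆ z, h z := le_ciSup (bddAbove_range_of_abs_le hC)
  have hε : 0 ≤ exp (-(2 * M)) := (exp_pos _).le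
  have hosc : ∀ {f : α → ℝ} {C : ℝ}, (∀ y, |f y| ≤ C) → spanSeminorm f ≤ M →
      ∀ y z, f z ≤ f y + 2 * M := fun hC hM y z => by
    linarith [sub_le_two_mul_spanSeminorm hC z y]
  have : IsProbabilityMeasure (μ.tilted f₁) :=
    isProbabilityMeasure_tilted (integrable_exp_of_forall_abs_le hf₁ hC₁)
  have : IsProbabilityMeasure (μ'.tilted f₂) :=
    isProbabilityMeasure_tilted (integrable_exp_of_forall_abs_le hf₂ hC₂)
  have hupper := integral_sub_integral_le_of_measure_le
    (ofReal_exp_neg_smul_le_tilted (μ := μ) hf₁ hC₁ (hosc hC₁ hM₁)) (hint _) hb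
  have hlower := le_integral_sub_integral_of_measure_le
    (ofReal_exp_neg_smul_le_tilted (μ := μ') hf₂ hC₂ (hosc hC₂ hM₂)) (hint _) ha
  simp only [integral_smul_measure, probReal_univ, measureReal_ennreal_smul_apply,
    ENNReal.toReal_ofReal hε, smul_eq_mul, mul_one] at hupper hlower
  have hgrad₁ := integral_sub_le_log_integral_exp_sub (μ := μ) hf₁ hf₂ hC₁ hC₂
  have hgrad₂ := integral_sub_le_log_integral_exp_sub (μ := μ') hf₂ hf₁ hC₂ hC₁
  simp only [← neg_sub (f₁ _), integral_neg] at hgrad₁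
  have htv := integral_sub_integral_le_mul_of_measureReal_sub_le hmix (hint _) (hint _) ha hb
  have hspan : 2 * spanSeminorm h = (⨆ z, h z) - ⨅ z, h z := by unfold spanSeminorm; ring
  rw [hspan]
  linarith [mul_le_mul_of_nonneg_left htv hε]

end MeasureTheory

/-- Under the mixing condition (A.1), the MPE operator is a local contraction in the span
seminorm: for every `M > 0` there is `α ∈ (0,1)`, depending only on `P` and `M` (not on the
bounded measurable reward `g`), such that `‖Tf₁ - Tf₂‖_sp ≤ α ‖f₁ - f₂‖_sp` whenever
`‖f₁‖_sp ≤ M` and `‖f₂‖_sp ≤ M`. -/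
theorem mpe_local_contraction {E : Type*} [MeasurableSpace E]
    (P : Kernel E E) [IsMarkovKernel P]
    (Λ : ℝ) (hΛ : Λ ∈ Set.Ioo (0 : ℝ) 1)
    (hmix : ∀ B : Set E, MeasurableSet B → ∀ x x' : E,
      |(P x B).toReal - (P x' B).toReal| ≤ Λ) :
    ∀ M : ℝ, 0 < M → ∃ α : ℝ, α ∈ Set.Ioo (0 : ℝ) 1 ∧
      ∀ g : E → ℝ, Measurable g → (∃ Cg : ℝ, ∀ x, |g x| ≤ Cg) →
      ∀ f₁ f₂ : E → ℝ, Measurable f₁ → Measurable f₂ →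
        (∃ C₁ : ℝ, ∀ x, |f₁ x| ≤ C₁) → (∃ C₂ : ℝ, ∀ x, |f₂ x| ≤ C₂) →
        spanSeminorm f₁ ≤ M → spanSeminorm f₂ ≤ M →
        spanSeminorm (fun x => mpeOp P g f₁ x - mpeOp P g f₂ x)
          ≤ α * spanSeminorm (fun x => f₁ x - f₂ x) := by
  intro M hM
  have hε : 0 < exp (-(2 * M)) * (1 - Λ) := mul_pos (exp_pos _) (sub_pos.2 hΛ.2)
  have hε' : exp (-(2 * M)) * (1 - Λ) < 1 :=
    mul_lt_one_of_nonneg_of_lt_one_left (exp_pos _).le (exp_lt_one_iff.2 (by linarith))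
      (by linarith [hΛ.1])
  refine ⟨1 - exp (-(2 * M)) * (1 - Λ), ⟨by linarith, by linarith⟩, ?_⟩
  rintro g - - f₁ f₂ hf₁ hf₂ ⟨C₁, hC₁⟩ ⟨C₂, hC₂⟩ hM₁ hM₂
  rcases isEmpty_or_nonempty E with hE | hE
  · simp [spanSeminorm]
  have hT : (fun x => mpeOp P g f₁ x - mpeOp P g f₂ x) = fun x =>
      log (∫ y, exp (f₁ y) ∂(P x)) - log (∫ y, exp (f₂ y) ∂(P x)) := by
    funext x
    simp only [mpeOp]
    ring
  rw [hT]
  calc spanSeminorm _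
      ≤ (1 - exp (-(2 * M)) * (1 - Λ)) * (2 * spanSeminorm (fun y => f₁ y - f₂ y)) / 2 :=
        spanSeminorm_le_of_forall_sub_le fun x x' =>
          log_integral_exp_sub_sub_le (fun B hB => (le_abs_self _).trans (hmix B hB x x'))
            hf₁ hf₂ hC₁ hC₂ hM₁ hM₂
    _ = (1 - exp (-(2 * M)) * (1 - Λ)) * spanSeminorm (fun x => f₁ x - f₂ x) := by ring
end

section
/- Let P be a Markov kernel on a measurable space E and g : E → ℝ bounded measurable, with MPE operator T. For bounded measurable f : E → ℝ and x ∈ E define the Esscher transform probability measure μ_{(x,f)}(B) := (∫_B e^{f(z)} P(x,dz)) / (∫_E e^{f(z)} P(x,dz)). Then for all bounded measurable f₁, f₂ : E → ℝ: ‖Tf₁ − Tf₂‖_sp ≤ ‖f₁ − f₂‖_sp · sup_{x,x'∈E} ‖μ_{(x,f₁)} − μ_{(x',f₂)}‖_var, where for probability measures μ₁, μ₂ the total variation distance is ‖μ₁ − μ₂‖_var := sup_B |μ₁(B) − μ₂(B)| over measurable sets B. -/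
open MeasureTheory ProbabilityTheory

/-- The Esscher transform measure of the set `B`:
`μ_{(x,f)}(B) = (∫_B e^{f} dP(x,·)) / (∫_E e^{f} dP(x,·))`. -/
noncomputable def esscher {E : Type*} [MeasurableSpace E] (P : Kernel E E) (f : E → ℝ)
    (x : E) (B : Set E) : ℝ :=
  (∫ z in B, Real.exp (f z) ∂(P x)) / ∫ z, Real.exp (f z) ∂(P x)

/-!
Since `g` cancels, `(Tf₁ - Tf₂)(x) = log ∫ e^{f₁} dP(x,·) - log ∫ e^{f₂} dP(x,·)`, and the
Esscher transform is Mathlib's tilted measure `(P x).tilted f`. Jensen's inequality under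
`μ_{(x,f₁)}` and `μ_{(x,f₂)}` bounds `(Tf₁ - Tf₂)(x)` above by `∫ (f₁ - f₂) dμ_{(x,f₁)}` and below
by `∫ (f₁ - f₂) dμ_{(x,f₂)}`. Hence `(Tf₁ - Tf₂)(x) - (Tf₁ - Tf₂)(x')` is at most the difference of
the integrals of `f₁ - f₂` against `μ_{(x,f₁)}` and `μ_{(x',f₂)}`; as `f₁ - f₂` takes values in an
interval of length `2‖f₁ - f₂‖_sp`, the layer cake formula bounds that difference by this length
times the total variation distance of the two measures.
-/

open Real Set

lemma le_iSup₃_of_forall_le {ι κ ν : Sort*} {h : ι → κ → ν → ℝ} {C : ℝ}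
    (hC : ∀ i j k, h i j k ≤ C) (i : ι) (j : κ) (k : ν) :
    h i j k ≤ ⨆ i, ⨆ j, ⨆ k, h i j k := by
  have h₃ : ∀ i j, ⨆ k, h i j k ≤ max C 0 := fun i j =>
    Real.iSup_le (fun k => (hC i j k).trans (le_max_left _ _)) (le_max_right _ _)
  have h₂ : ∀ i, ⨆ j, ⨆ k, h i j k ≤ max C 0 := fun i =>
    Real.iSup_le (h₃ i) (le_max_right _ _)
  refine le_ciSup_of_le ⟨max C 0, forall_mem_range.2 h₂⟩ i ?_
  refine le_ciSup_of_le ⟨max C 0, forall_mem_range.2 (h₃ i)⟩ j ?_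
  exact le_ciSup ⟨max C 0, forall_mem_range.2 fun k => (hC i j k).trans (le_max_left _ _)⟩ k

lemma spanSeminorm_le_of_forall_sub_le_s5 {E : Type*} [Nonempty E] {F : E → ℝ} {K : ℝ}
    (h : ∀ x y, F x - F y ≤ K) : spanSeminorm F ≤ K / 2 := by
  have : ⨆ x, F x ≤ (⨅ y, F y) + K :=
    ciSup_le fun x => by linarith [le_ciInf fun y => (by linarith [h x y] : F x - K ≤ F y)]
  unfold spanSeminorm
  linarith

section Measure

variable {α : Type*} [MeasurableSpace α] {μ ν : Measure α}

lemma integrable_of_abs_le [IsFiniteMeasure μ] {f : α → ℝ} (hf : Measurable f) {C : ℝ}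
    (hC : ∀ x, |f x| ≤ C) : Integrable f μ :=
  .of_bound hf.aestronglyMeasurable C (ae_of_all _ fun x => (norm_eq_abs _).trans_le (hC x))

lemma integrable_exp_of_abs_le [IsFiniteMeasure μ] {f : α → ℝ} (hf : Measurable f) {C : ℝ}
    (hC : ∀ x, |f x| ≤ C) : Integrable (fun x => exp (f x)) μ :=
  integrable_of_abs_le hf.exp fun x => by
    rw [abs_of_pos (exp_pos _)]
    exact exp_le_exp.2 ((le_abs_self _).trans (hC x))

/-- By the layer cake formula, `∫ h dμ - ∫ h dν = ∫₀^{M-m} (μ {h ≥ m + t} - ν {h ≥ m + t}) dt`. -/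
lemma integral_sub_integral_le_of_measureReal_sub_le [IsProbabilityMeasure μ]
    [IsProbabilityMeasure ν] {h : α → ℝ} (hh : Measurable h) {m M S : ℝ}
    (hm : ∀ x, m ≤ h x) (hM : ∀ x, h x ≤ M)
    (hS : ∀ s, MeasurableSet s → μ.real s - ν.real s ≤ S) :
    ∫ x, h x ∂μ - ∫ x, h x ∂ν ≤ (M - m) * S := by
  obtain ⟨x₀⟩ := nonempty_of_isProbabilityMeasure μ
  set k : α → ℝ := fun x => h x - m
  have hk : ∀ x, |k x| ≤ M - m := fun x =>
    abs_le.2 ⟨by linarith [hm x, hM x], by linarith [hM x]⟩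
  have layer : ∀ (ρ : Measure α) [IsProbabilityMeasure ρ],
      ∫ x, h x ∂ρ = m + ∫ t in Ioc 0 (M - m), ρ.real {x | t ≤ k x} := fun ρ _ => by
    have hki : Integrable k ρ := integrable_of_abs_le (hh.sub_const m) hk
    rw [← hki.integral_eq_integral_Ioc_meas_le (ae_of_all _ fun x => sub_nonneg.2 (hm x))
      (ae_of_all _ fun x => (le_abs_self _).trans (hk x))]
    have : ∫ x, (k x + m) ∂ρ = ∫ x, k x ∂ρ + m := by
      simp [integral_add hki (integrable_const m)]
    simp only [k, sub_add_cancel] at this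
    linarith
  have hint : ∀ (ρ : Measure α) [IsProbabilityMeasure ρ],
      IntegrableOn (fun t => ρ.real {x | t ≤ k x}) (Ioc 0 (M - m)) := fun ρ _ =>
    have hanti : Antitone fun t => ρ.real {x | t ≤ k x} := fun _ _ hst =>
      measureReal_mono fun _ hx => le_trans hst hx
    (hanti.locallyIntegrable.integrableOn_isCompact isCompact_Icc).mono_set Ioc_subset_Icc_self
  rw [layer μ, layer ν, add_sub_add_left_eq_sub, ← integral_sub (hint μ) (hint ν)]
  calc ∫ t in Ioc 0 (M - m), (μ.real {x | t ≤ k x} - ν.real {x | t ≤ k x})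
      ≤ ∫ _ in Ioc 0 (M - m), S :=
        setIntegral_mono ((hint μ).sub (hint ν)) (integrableOn_const measure_Ioc_lt_top.ne)
          fun t => hS _ (measurableSet_le measurable_const (hh.sub_const m))
    _ = (M - m) * S := by
        rw [setIntegral_const, Real.volume_real_Ioc_of_le (by linarith [hm x₀, hM x₀]),
          smul_eq_mul, sub_zero]

lemma integral_le_log_integral_exp [IsProbabilityMeasure μ] {φ : α → ℝ} (hφ : Integrable φ μ)
    (hexp : Integrable (fun x => exp (φ x)) μ) :
    ∫ x, φ x ∂μ ≤ log (∫ x, exp (φ x) ∂μ) :=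
  (le_log_iff_exp_le (integral_exp_pos hexp)).2 <|
    convexOn_exp.map_integral_le continuousOn_exp isClosed_univ (ae_of_all _ fun _ => trivial)
      hφ hexp

/-- Jensen's inequality for `e^{g - f}` under `μ.tilted f`, whose integral is
`∫ e^g dμ / ∫ e^f dμ`. -/
lemma integral_sub_tilted_le_log_integral_exp_sub [NeZero μ] {f g : α → ℝ}
    (hf : Integrable (fun x => exp (f x)) μ) (hg : Integrable (fun x => exp (g x)) μ)
    (hgf : Integrable (fun x => g x - f x) (μ.tilted f)) :
    ∫ x, (g x - f x) ∂(μ.tilted f) ≤ log (∫ x, exp (g x) ∂μ) - log (∫ x, exp (f x) ∂μ) := by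
  have := isProbabilityMeasure_tilted hf
  have hexp : Integrable (fun x => exp (g x - f x)) (μ.tilted f) := by
    refine (integrable_tilted_iff hf _).2 (hg.congr (ae_of_all _ fun x => ?_))
    simp [← exp_add]
  calc ∫ x, (g x - f x) ∂(μ.tilted f) ≤ log (∫ x, exp (g x - f x) ∂(μ.tilted f)) :=
        integral_le_log_integral_exp hgf hexp
    _ = _ := by
        rw [integral_exp_tilted f (fun x => g x - f x)]
        simp only [Pi.add_apply, add_sub_cancel]
        exact log_div (integral_exp_pos hg).ne' (integral_exp_pos hf).ne'

lemma log_integral_exp_ratio_sub_le [IsProbabilityMeasure μ] [IsProbabilityMeasure ν]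
    {f₁ f₂ : α → ℝ} (hf₁ : Measurable f₁) (hf₂ : Measurable f₂) {C₁ C₂ : ℝ}
    (hC₁ : ∀ x, |f₁ x| ≤ C₁) (hC₂ : ∀ x, |f₂ x| ≤ C₂) {m M S : ℝ}
    (hm : ∀ x, m ≤ f₁ x - f₂ x) (hM : ∀ x, f₁ x - f₂ x ≤ M)
    (hS : ∀ s, MeasurableSet s → (μ.tilted f₁).real s - (ν.tilted f₂).real s ≤ S) :
    log (∫ x, exp (f₁ x) ∂μ) - log (∫ x, exp (f₂ x) ∂μ)
        - (log (∫ x, exp (f₁ x) ∂ν) - log (∫ x, exp (f₂ x) ∂ν)) ≤ (M - m) * S := by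
  have hd : ∀ x, |f₁ x - f₂ x| ≤ C₁ + C₂ := fun x =>
    (abs_sub _ _).trans (add_le_add (hC₁ x) (hC₂ x))
  have hd' : ∀ x, |f₂ x - f₁ x| ≤ C₁ + C₂ := fun x => abs_sub_comm (f₂ x) _ ▸ hd x
  have h₁μ : Integrable (fun x => exp (f₁ x)) μ := integrable_exp_of_abs_le hf₁ hC₁
  have h₂μ : Integrable (fun x => exp (f₂ x)) μ := integrable_exp_of_abs_le hf₂ hC₂
  have h₁ν : Integrable (fun x => exp (f₁ x)) ν := integrable_exp_of_abs_le hf₁ hC₁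
  have h₂ν : Integrable (fun x => exp (f₂ x)) ν := integrable_exp_of_abs_le hf₂ hC₂
  have := isProbabilityMeasure_tilted h₁μ
  have := isProbabilityMeasure_tilted h₂ν
  have hgibbsμ := integral_sub_tilted_le_log_integral_exp_sub h₁μ h₂μ
    (integrable_of_abs_le (hf₂.sub hf₁) hd')
  have hgibbsν := integral_sub_tilted_le_log_integral_exp_sub h₂ν h₁ν
    (integrable_of_abs_le (hf₁.sub hf₂) hd)
  have htv := integral_sub_integral_le_of_measureReal_sub_le (h := fun x => f₁ x - f₂ x)
    (hf₁.sub hf₂) hm hM hS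
  have hneg : ∫ x, (f₂ x - f₁ x) ∂μ.tilted f₁ = -∫ x, (f₁ x - f₂ x) ∂μ.tilted f₁ := by
    rw [← integral_neg]
    simp_rw [neg_sub]
  linarith

end Measure

lemma esscher_eq_measureReal_tilted {E : Type*} [MeasurableSpace E] (P : Kernel E E)
    [IsSFiniteKernel P] (f : E → ℝ) (x : E) (B : Set E) :
    esscher P f x B = ((P x).tilted f).real B := by
  rw [measureReal_def, tilted_apply_eq_ofReal_integral, integral_div,
    ENNReal.toReal_ofReal (div_nonneg (integral_nonneg fun _ => (exp_pos _).le)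
      (integral_nonneg fun _ => (exp_pos _).le)), esscher]

theorem mpe_span_esscher_bound_general {E : Type*} [MeasurableSpace E]
    (P : Kernel E E) [IsMarkovKernel P]
    (g : E → ℝ)
    (f₁ f₂ : E → ℝ) (hf₁_meas : Measurable f₁) (hf₂_meas : Measurable f₂)
    (C₁ : ℝ) (hf₁_bdd : ∀ x, |f₁ x| ≤ C₁) (C₂ : ℝ) (hf₂_bdd : ∀ x, |f₂ x| ≤ C₂) :
    spanSeminorm (fun x => mpeOp P g f₁ x - mpeOp P g f₂ x)
      ≤ spanSeminorm (fun x => f₁ x - f₂ x) *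
        ⨆ x : E, ⨆ x' : E, ⨆ B : {B : Set E // MeasurableSet B},
          |esscher P f₁ x B.1 - esscher P f₂ x' B.1| := by
  rcases isEmpty_or_nonempty E with hE | hE
  · simp [spanSeminorm]
  simp only [esscher_eq_measureReal_tilted]
  set tv := fun x x' (B : {B : Set E // MeasurableSet B}) =>
    |((P x).tilted f₁).real B.1 - ((P x').tilted f₂).real B.1|
  set S := ⨆ x, ⨆ x', ⨆ B, tv x x' B
  have hTV : ∀ x x' B, MeasurableSet B →
      ((P x).tilted f₁).real B - ((P x').tilted f₂).real B ≤ S := fun x x' B hB =>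
    (le_abs_self _).trans <| le_iSup₃_of_forall_le (h := tv) (fun _ _ _ =>
      abs_sub_le_of_nonneg_of_le measureReal_nonneg measureReal_le_one measureReal_nonneg
        measureReal_le_one) x x' ⟨B, hB⟩
  set d := fun x => f₁ x - f₂ x
  have hd : ∀ x, |d x| ≤ C₁ + C₂ := fun x =>
    (abs_sub _ _).trans (add_le_add (hf₁_bdd x) (hf₂_bdd x))
  have hdA : BddAbove (range d) := ⟨_, forall_mem_range.2 fun x => (le_abs_self _).trans (hd x)⟩
  have hdB : BddBelow (range d) := ⟨_, forall_mem_range.2 fun x => neg_le_of_abs_le (hd x)⟩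
  have key : ∀ x x', mpeOp P g f₁ x - mpeOp P g f₂ x - (mpeOp P g f₁ x' - mpeOp P g f₂ x')
      ≤ ((⨆ x, d x) - ⨅ x, d x) * S := fun x x' => by
    simpa only [mpeOp, add_sub_add_left_eq_sub] using log_integral_exp_ratio_sub_le
      hf₁_meas hf₂_meas hf₁_bdd hf₂_bdd (ciInf_le hdB) (le_ciSup hdA) (hTV x x')
  calc _ ≤ ((⨆ x, d x) - ⨅ x, d x) * S / 2 := spanSeminorm_le_of_forall_sub_le_s5 key
    _ = _ := by rw [spanSeminorm]; ring

/-- The span of `Tf₁ - Tf₂` is bounded by the span of `f₁ - f₂` times the supremum over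
`x, x'` of the total variation distance between the Esscher transforms `μ_{(x,f₁)}` and
`μ_{(x',f₂)}`. -/
theorem mpe_span_esscher_bound {E : Type*} [MeasurableSpace E]
    (P : Kernel E E) [IsMarkovKernel P]
    (g : E → ℝ) (hg_meas : Measurable g) (Cg : ℝ) (hg_bdd : ∀ x, |g x| ≤ Cg)
    (f₁ f₂ : E → ℝ) (hf₁_meas : Measurable f₁) (hf₂_meas : Measurable f₂)
    (C₁ : ℝ) (hf₁_bdd : ∀ x, |f₁ x| ≤ C₁) (C₂ : ℝ) (hf₂_bdd : ∀ x, |f₂ x| ≤ C₂) :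
    spanSeminorm (fun x => mpeOp P g f₁ x - mpeOp P g f₂ x)
      ≤ spanSeminorm (fun x => f₁ x - f₂ x) *
        ⨆ x : E, ⨆ x' : E, ⨆ B : {B : Set E // MeasurableSet B},
          |esscher P f₁ x B.1 - esscher P f₂ x' B.1| :=
  mpe_span_esscher_bound_general P g f₁ f₂ hf₁_meas hf₂_meas C₁ hf₁_bdd C₂ hf₂_bdd
end

section
/- Let E = {1,2}, let Λ ∈ (0,1), and let P be the Markov kernel on E with P(1,·) = δ₁ and P(2,·) = (1−Λ)δ₁ + Λδ₂. Then for a function g : E → ℝ, there exist w : E → ℝ and λ ∈ ℝ satisfying the multiplicative Poisson equation w(x) = g(x) − λ + log ∫_E e^{w(y)} P(x,dy) for x ∈ {1,2} if and only if g(1) − g(2) > log Λ (equivalently: g(1) > g(2), or ‖g‖_sp < −log √Λ). -/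
open MeasureTheory ProbabilityTheory

/-- On the two-point state space `E = {1, 2}` (modelled by `Fin 2`, with `0` playing the
role of state `1` and `1` the role of state `2`), let `P(1,·) = δ₁` and
`P(2,·) = (1-Λ)δ₁ + Λδ₂` for `Λ ∈ (0,1)`. Then the multiplicative Poisson equation
`w(x) = g(x) - λ + log ∫ e^{w} dP(x,·)` admits a solution `(w, λ)` if and only if
`g(1) - g(2) > log Λ`. -/
theorem two_state_mpe_iff (Λ : ℝ) (hΛ : Λ ∈ Set.Ioo (0 : ℝ) 1)
    (P : Kernel (Fin 2) (Fin 2)) [IsMarkovKernel P]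
    (hP0 : P 0 = Measure.dirac 0)
    (hP1 : P 1 = ENNReal.ofReal (1 - Λ) • Measure.dirac 0 + ENNReal.ofReal Λ • Measure.dirac 1)
    (g : Fin 2 → ℝ) :
    (∃ (w : Fin 2 → ℝ) (lam : ℝ),
        ∀ x : Fin 2, w x = g x - lam + Real.log (∫ y, Real.exp (w y) ∂(P x)))
      ↔ g 0 - g 1 > Real.log Λ := by
  obtain ⟨hΛ0, hΛ1⟩ := hΛ
  have h1Λ : (0:ℝ) < 1 - Λ := by linarith
  have hintgen : ∀ w : Fin 2 → ℝ, ∫ y, Real.exp (w y) ∂(P 1)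
      = (1 - Λ) * Real.exp (w 0) + Λ * Real.exp (w 1) := by
    intro w
    have hI : Integrable (fun y => Real.exp (w y)) (P 1) := .of_finite
    rw [hP1] at hI ⊢
    rw [integral_add_measure hI.left_of_add_measure hI.right_of_add_measure,
      integral_smul_measure, integral_smul_measure, integral_dirac, integral_dirac,
      ENNReal.toReal_ofReal h1Λ.le, ENNReal.toReal_ofReal hΛ0.le, smul_eq_mul, smul_eq_mul]
  constructor
  · rintro ⟨w, lam, hw⟩
    have h0 := hw 0
    have h1 := hw 1
    rw [hP0, integral_dirac, Real.log_exp] at h0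
    have hlam : lam = g 0 := by linarith
    rw [hintgen w, hlam] at h1
    have hgt : Λ * Real.exp (w 1) < (1 - Λ) * Real.exp (w 0) + Λ * Real.exp (w 1) := by
      nlinarith [Real.exp_pos (w 0)]
    have hlog := Real.log_lt_log (by positivity) hgt
    rw [Real.log_mul (ne_of_gt hΛ0) (Real.exp_ne_zero _), Real.log_exp] at hlog
    linarith
  · intro hg
    have he : 0 < Real.exp (g 0 - g 1) - Λ := by
      have h2 : Real.exp (Real.log Λ) < Real.exp (g 0 - g 1) := Real.exp_lt_exp.mpr hg
      rw [Real.exp_log hΛ0] at h2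
      linarith
    set c : ℝ := (1 - Λ) / (Real.exp (g 0 - g 1) - Λ) with hc
    have hcpos : 0 < c := by positivity
    refine ⟨fun x => if x = 0 then 0 else Real.log c, g 0, ?_⟩
    intro x
    have hint1 : ∫ y, Real.exp ((fun x => if x = 0 then 0 else Real.log c) y) ∂(P 1)
        = (1 - Λ) + Λ * c := by
      rw [hintgen]
      simp [Real.exp_log hcpos]
    have hkey : (1 - Λ) + Λ * c = c * Real.exp (g 0 - g 1) := by
      rw [hc]
      field_simp
      ring
    fin_cases x
    · simp [hP0, integral_dirac]
    · simp only [Fin.mk_one, show ((1 : Fin 2) = 0) = False by simp, if_false]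
      rw [hint1, hkey, Real.log_mul (ne_of_gt hcpos) (Real.exp_ne_zero _), Real.log_exp]
      ring
end

section
/- Let M > 0 and set α := 1/(1 + e^{−M}). Then for all real numbers M₁, M₂ with −M ≤ M₂ < M₁ ≤ M one has −(α+1)(M₁−M₂) < log((1+e^{M₂})/(1+e^{M₁})) < (α−1)(M₁−M₂). Consequently |(M₁ − M₂) + log((1+e^{M₂})/(1+e^{M₁}))| ≤ α(M₁ − M₂). -/
/-!
Write `log ((1 + e^{M₂}) / (1 + e^{M₁}))` as `g M₂ - g M₁` for the softplus `g x = log (1 + eˣ)`,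
whose derivative is the sigmoid `σ`. By the mean value theorem `g M₁ - g M₂ = σ c (M₁ - M₂)` for
some `c ∈ (M₂, M₁)`, and `σ (-M) < σ c < 1` because `σ` is increasing with values in `(0, 1)`.
Since `α = σ M` and `σ (-M) = 1 - α`, this is the claim.
-/

open Real Set

lemma hasDerivAt_log_one_add_exp (x : ℝ) :
    HasDerivAt (fun y => log (1 + exp y)) (sigmoid x) x := by
  convert ((hasDerivAt_exp x).const_add 1).log (by positivity) using 1
  rw [sigmoid_def, exp_neg]
  field_simp
  ring

lemma exists_log_one_add_exp_sub_eq_sigmoid_mul {a b : ℝ} (hab : a < b) :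
    ∃ c ∈ Ioo a b, log (1 + exp b) - log (1 + exp a) = sigmoid c * (b - a) := by
  obtain ⟨c, hc, hslope⟩ := exists_hasDerivAt_eq_slope (fun y => log (1 + exp y)) sigmoid hab
    (fun x _ => (hasDerivAt_log_one_add_exp x).continuousAt.continuousWithinAt)
    fun x _ => hasDerivAt_log_one_add_exp x
  refine ⟨c, hc, ?_⟩
  rw [hslope, div_mul_cancel₀ _ (sub_pos.mpr hab).ne']

lemma log_one_add_exp_sub_lt_sub {a b : ℝ} (hab : a < b) :
    log (1 + exp b) - log (1 + exp a) < b - a := by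
  obtain ⟨c, -, hc⟩ := exists_log_one_add_exp_sub_eq_sigmoid_mul hab
  rw [hc]
  exact mul_lt_of_lt_one_left (sub_pos.mpr hab) (sigmoid_lt_one c)

lemma sigmoid_mul_sub_lt_log_one_add_exp_sub {m a b : ℝ} (hma : m ≤ a) (hab : a < b) :
    sigmoid m * (b - a) < log (1 + exp b) - log (1 + exp a) := by
  obtain ⟨c, hc, hc_eq⟩ := exists_log_one_add_exp_sub_eq_sigmoid_mul hab
  rw [hc_eq]
  exact mul_lt_mul_of_pos_right (sigmoid_lt (hma.trans_lt hc.1)) (sub_pos.mpr hab)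

theorem two_state_contraction_inequality_general (M : ℝ)
    (α : ℝ) (hα : α = 1 / (1 + Real.exp (-M)))
    (M₁ M₂ : ℝ) (h₂ : -M ≤ M₂) (h₁₂ : M₂ < M₁) :
    (-(α + 1) * (M₁ - M₂) < Real.log ((1 + Real.exp M₂) / (1 + Real.exp M₁)) ∧
      Real.log ((1 + Real.exp M₂) / (1 + Real.exp M₁)) < (α - 1) * (M₁ - M₂)) ∧
    |(M₁ - M₂) + Real.log ((1 + Real.exp M₂) / (1 + Real.exp M₁))| ≤ α * (M₁ - M₂) := by
  have hα_sigmoid : α = sigmoid M := by rw [hα, sigmoid_def, one_div]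
  have hαd : 0 < α * (M₁ - M₂) := mul_pos (hα_sigmoid ▸ sigmoid_pos M) (sub_pos.mpr h₁₂)
  have hupper := log_one_add_exp_sub_lt_sub h₁₂
  have hlower := sigmoid_mul_sub_lt_log_one_add_exp_sub h₂ h₁₂
  rw [sigmoid_neg, ← hα_sigmoid] at hlower
  rw [log_div (by positivity) (by positivity)]
  exact ⟨⟨by linarith, by linarith⟩, abs_le.mpr ⟨by linarith, by linarith⟩⟩

/-- The analytic inequality behind the local contraction constant `α(M) = 1/(1+e^{-M})`
for the two-state multiplicative Poisson operator: for `-M ≤ M₂ < M₁ ≤ M`,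
`-(α+1)(M₁-M₂) < log((1+e^{M₂})/(1+e^{M₁})) < (α-1)(M₁-M₂)` and consequently
`|(M₁-M₂) + log((1+e^{M₂})/(1+e^{M₁}))| ≤ α (M₁-M₂)`. -/
theorem two_state_contraction_inequality (M : ℝ) (hM : 0 < M)
    (α : ℝ) (hα : α = 1 / (1 + Real.exp (-M)))
    (M₁ M₂ : ℝ) (h₂ : -M ≤ M₂) (h₁₂ : M₂ < M₁) (h₁ : M₁ ≤ M) :
    (-(α + 1) * (M₁ - M₂) < Real.log ((1 + Real.exp M₂) / (1 + Real.exp M₁)) ∧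
      Real.log ((1 + Real.exp M₂) / (1 + Real.exp M₁)) < (α - 1) * (M₁ - M₂)) ∧
    |(M₁ - M₂) + Real.log ((1 + Real.exp M₂) / (1 + Real.exp M₁))| ≤ α * (M₁ - M₂) :=
  two_state_contraction_inequality_general M α hα M₁ M₂ h₂ h₁₂
end

section
/- Let P be a Markov kernel on a measurable space E satisfying the mixing condition (A.1) with Λ ∈ (0,1), and let g : E → ℝ be bounded measurable with MPE operator T. Then for every bounded measurable f : E → ℝ one has ‖Tf‖_sp ≤ ‖g‖_sp + (1/2)·log(1 + Λ·e^{2‖f‖_sp}). -/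
open MeasureTheory ProbabilityTheory

/-!
Write `I x = ∫ e^f dP(x, ·)` and let `m ≤ f ≤ M`, so `M - m = 2‖f‖_sp`. By the layer-cake
formula, the mixing condition bounds the difference of the integrals of a `[a, b]`-valued function
against `P(x, ·)` and `P(x', ·)` by `Λ (b - a)`. Applied to `e^f` this gives
`I x - I x' ≤ Λ (e^M - e^m) ≤ Λ e^{M - m} e^m ≤ Λ e^{M - m} I x'`, that is
`log I x - log I x' ≤ log (1 + Λ e^{2‖f‖_sp})`. Adding `g x - g x' ≤ 2‖g‖_sp` bounds every
difference `Tf x - Tf x'`, hence the oscillation `2‖Tf‖_sp`.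
-/

open Set Real

section Span

variable {E : Type*} {u : E → ℝ}

lemma two_mul_spanSeminorm (u : E → ℝ) : 2 * spanSeminorm u = (⨆ x, u x) - ⨅ x, u x := by
  unfold spanSeminorm; ring

lemma spanSeminorm_of_isEmpty [IsEmpty E] (u : E → ℝ) : spanSeminorm u = 0 := by
  simp [spanSeminorm]

lemma sub_le_two_mul_spanSeminorm_s8 (hua : BddAbove (range u)) (hub : BddBelow (range u))
    (x x' : E) : u x - u x' ≤ 2 * spanSeminorm u := by
  rw [two_mul_spanSeminorm]
  exact sub_le_sub (le_ciSup hua x) (ciInf_le hub x')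

lemma two_mul_spanSeminorm_le [Nonempty E] {D : ℝ} (h : ∀ x x', u x - u x' ≤ D) :
    2 * spanSeminorm u ≤ D := by
  rw [two_mul_spanSeminorm, sub_le_iff_le_add]
  exact ciSup_le fun x => sub_le_iff_le_add'.1 (le_ciInf fun x' => by linarith [h x x'])

end Span

section Mixing

variable {E : Type*} [MeasurableSpace E] {μ ν : Measure E} {h : E → ℝ} {C Λ : ℝ}

lemma integral_eq_intervalIntegral_measureReal_lt [IsProbabilityMeasure μ] (hmeas : Measurable h)
    (h0 : ∀ y, 0 ≤ h y) (hC : ∀ y, h y ≤ C) :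
    ∫ y, h y ∂μ = ∫ t in (0 : ℝ)..C, μ.real {y | t < h y} := by
  have hC0 : 0 ≤ C := (h0 (nonempty_of_isProbabilityMeasure μ).some).trans (hC _)
  have hint : Integrable h μ :=
    .of_mem_Icc 0 C hmeas.aemeasurable (.of_forall fun y => ⟨h0 y, hC y⟩)
  rw [hint.integral_eq_integral_meas_lt (.of_forall h0), intervalIntegral.integral_of_le hC0,
    setIntegral_eq_of_subset_of_forall_sdiff_eq_zero measurableSet_Ioi Ioc_subset_Ioi_self]
  rintro t ⟨ht0, htC⟩
  have hCt : C < t := lt_of_not_ge fun htC' => htC ⟨ht0, htC'⟩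
  have : {y | t < h y} = ∅ := eq_empty_of_forall_notMem fun y hy => (hC y).not_gt (hCt.trans hy)
  rw [this, measureReal_empty]

lemma integral_sub_integral_le_of_nonneg_of_le [IsProbabilityMeasure μ] [IsProbabilityMeasure ν]
    (hmix : ∀ B, MeasurableSet B → μ.real B - ν.real B ≤ Λ) (hmeas : Measurable h)
    (h0 : ∀ y, 0 ≤ h y) (hC : ∀ y, h y ≤ C) :
    ∫ y, h y ∂μ - ∫ y, h y ∂ν ≤ Λ * C := by
  have hC0 : 0 ≤ C := (h0 (nonempty_of_isProbabilityMeasure μ).some).trans (hC _)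
  have hanti (κ : Measure E) [IsFiniteMeasure κ] : Antitone fun t : ℝ => κ.real {y | t < h y} :=
    fun _ _ hst => measureReal_mono fun y (hy : _ < h y) => hst.trans_lt hy
  rw [integral_eq_intervalIntegral_measureReal_lt hmeas h0 hC,
    integral_eq_intervalIntegral_measureReal_lt hmeas h0 hC,
    ← intervalIntegral.integral_sub ((hanti μ).intervalIntegrable)
      ((hanti ν).intervalIntegrable)]
  calc ∫ t in (0 : ℝ)..C, (μ.real {y | t < h y} - ν.real {y | t < h y})
      ≤ ∫ _ in (0 : ℝ)..C, Λ :=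
        intervalIntegral.integral_mono_on hC0
          (((hanti μ).intervalIntegrable).sub (hanti ν).intervalIntegrable)
          intervalIntegrable_const fun t _ => hmix _ (measurableSet_lt measurable_const hmeas)
    _ = Λ * C := by rw [intervalIntegral.integral_const, smul_eq_mul, sub_zero, mul_comm]

lemma integral_sub_integral_le_of_mem_Icc [IsProbabilityMeasure μ] [IsProbabilityMeasure ν]
    {a b : ℝ} (hmix : ∀ B, MeasurableSet B → μ.real B - ν.real B ≤ Λ) (hmeas : Measurable h)
    (hab : ∀ y, h y ∈ Icc a b) :
    ∫ y, h y ∂μ - ∫ y, h y ∂ν ≤ Λ * (b - a) := by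
  have hint (κ : Measure E) [IsProbabilityMeasure κ] : Integrable h κ :=
    .of_mem_Icc a b hmeas.aemeasurable (.of_forall hab)
  have key := integral_sub_integral_le_of_nonneg_of_le hmix (hmeas.sub_const a)
    (fun y => sub_nonneg.2 (hab y).1) (fun y => sub_le_sub_right (hab y).2 a)
  rwa [integral_sub (hint μ) (integrable_const a), integral_sub (hint ν) (integrable_const a),
    integral_const, integral_const, probReal_univ, probReal_univ, sub_sub_sub_cancel_right] at key

lemma log_integral_exp_sub_log_integral_exp_le [IsProbabilityMeasure μ] [IsProbabilityMeasure ν]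
    {f : E → ℝ} (hmix : ∀ B, MeasurableSet B → μ.real B - ν.real B ≤ Λ) (hmeas : Measurable f)
    (hfa : BddAbove (range f)) (hfb : BddBelow (range f)) :
    log (∫ y, exp (f y) ∂μ) - log (∫ y, exp (f y) ∂ν)
      ≤ log (1 + Λ * exp (2 * spanSeminorm f)) := by
  have hΛ : 0 ≤ Λ := by simpa using hmix ∅ MeasurableSet.empty
  have hexp_mem (y : E) : exp (f y) ∈ Icc (exp (⨅ x, f x)) (exp (⨆ x, f x)) :=
    ⟨exp_le_exp.2 (ciInf_le hfb y), exp_le_exp.2 (le_ciSup hfa y)⟩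
  have hexp_inf_le (κ : Measure E) [IsProbabilityMeasure κ] :
      exp (⨅ x, f x) ≤ ∫ y, exp (f y) ∂κ := by
    simpa using integral_mono (integrable_const (μ := κ) _)
      (.of_mem_Icc _ _ hmeas.exp.aemeasurable (.of_forall hexp_mem)) fun y => (hexp_mem y).1
  have hexp_sup : exp (⨆ x, f x) = exp (⨅ x, f x) * exp (2 * spanSeminorm f) := by
    rw [two_mul_spanSeminorm, ← exp_add, add_sub_cancel]
  have hdiff := integral_sub_integral_le_of_mem_Icc hmix hmeas.exp hexp_mem
  have hνpos := (exp_pos _).trans_le (hexp_inf_le ν)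
  rw [sub_le_iff_le_add', ← log_mul hνpos.ne' (by positivity)]
  refine log_le_log ((exp_pos _).trans_le (hexp_inf_le μ)) ?_
  calc ∫ y, exp (f y) ∂μ
      ≤ ∫ y, exp (f y) ∂ν + Λ * exp (2 * spanSeminorm f) * exp (⨅ x, f x) := by
        rw [hexp_sup] at hdiff
        nlinarith [exp_pos (⨅ x, f x)]
    _ ≤ ∫ y, exp (f y) ∂ν + Λ * exp (2 * spanSeminorm f) * ∫ y, exp (f y) ∂ν := by
        gcongr; exact hexp_inf_le ν
    _ = (∫ y, exp (f y) ∂ν) * (1 + Λ * exp (2 * spanSeminorm f)) := by ring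

end Mixing

theorem mpe_span_growth_bound_general {E : Type*} [MeasurableSpace E]
    (P : Kernel E E) [IsMarkovKernel P]
    (Λ : ℝ) (hΛ : Λ ∈ Set.Ioo (0 : ℝ) 1)
    (hmix : ∀ B : Set E, MeasurableSet B → ∀ x x' : E,
      |(P x B).toReal - (P x' B).toReal| ≤ Λ)
    (g : E → ℝ) (Cg : ℝ) (hg_bdd : ∀ x, |g x| ≤ Cg)
    (f : E → ℝ) (hf_meas : Measurable f) (Cf : ℝ) (hf_bdd : ∀ x, |f x| ≤ Cf) :
    spanSeminorm (mpeOp P g f)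
      ≤ spanSeminorm g + (1 / 2) * Real.log (1 + Λ * Real.exp (2 * spanSeminorm f)) := by
  rcases isEmpty_or_nonempty E with hE | hE
  · have : 0 ≤ log (1 + Λ) := log_nonneg (by linarith [hΛ.1])
    simpa [spanSeminorm_of_isEmpty] using this
  have bdd {u : E → ℝ} {C : ℝ} (hu : ∀ x, |u x| ≤ C) : BddAbove (range u) ∧ BddBelow (range u) :=
    ⟨⟨C, forall_mem_range.2 fun x => (abs_le.1 (hu x)).2⟩,
      ⟨-C, forall_mem_range.2 fun x => (abs_le.1 (hu x)).1⟩⟩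
  suffices ∀ x x', mpeOp P g f x - mpeOp P g f x'
      ≤ 2 * spanSeminorm g + log (1 + Λ * exp (2 * spanSeminorm f)) by
    linarith [two_mul_spanSeminorm_le this]
  intro x x'
  have hg := sub_le_two_mul_spanSeminorm_s8 (bdd hg_bdd).1 (bdd hg_bdd).2 x x'
  have hlog := log_integral_exp_sub_log_integral_exp_le
    (fun B hB => (le_abs_self _).trans (hmix B hB x x')) hf_meas (bdd hf_bdd).1 (bdd hf_bdd).2
  simp only [mpeOp]
  linarith

/-- Under the mixing condition (A.1) with constant `Λ`, the MPE operator satisfies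
`‖Tf‖_sp ≤ ‖g‖_sp + (1/2) log(1 + Λ e^{2‖f‖_sp})`. -/
theorem mpe_span_growth_bound {E : Type*} [MeasurableSpace E]
    (P : Kernel E E) [IsMarkovKernel P]
    (Λ : ℝ) (hΛ : Λ ∈ Set.Ioo (0 : ℝ) 1)
    (hmix : ∀ B : Set E, MeasurableSet B → ∀ x x' : E,
      |(P x B).toReal - (P x' B).toReal| ≤ Λ)
    (g : E → ℝ) (hg_meas : Measurable g) (Cg : ℝ) (hg_bdd : ∀ x, |g x| ≤ Cg)
    (f : E → ℝ) (hf_meas : Measurable f) (Cf : ℝ) (hf_bdd : ∀ x, |f x| ≤ Cf) :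
    spanSeminorm (mpeOp P g f)
      ≤ spanSeminorm g + (1 / 2) * Real.log (1 + Λ * Real.exp (2 * spanSeminorm f)) :=
  mpe_span_growth_bound_general P Λ hΛ hmix g Cg hg_bdd f hf_meas Cf hf_bdd
end

section
/- Let E = {1, 2, 3, …} (the positive integers) and let P be the Markov kernel with P(1,·) = δ₁ and, for i ≥ 2, P(i,·) = (1 − 2^{1−i})·δ₁ + 2^{1−i}·δ_{i+1}. Then: (i) for every n ≥ 1 one has P_n(1, {n+2}) = 0 while P_n(2, {n+2}) > 0, so the strong mixing condition (A.3) fails for every n and L; and (ii) nevertheless, for every bounded g : E → ℝ a bounded MPE solution exists: there are a bounded w : E → ℝ and λ ∈ ℝ with w(x) = g(x) − λ + log ∫_E e^{w(y)} P(x,dy) for all x ∈ E. -/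
/-!
From state `1` the chain never moves, while from `2` it climbs to `n + 2` in `n` steps with
positive probability, so `P_n(1, ·)` and `P_n(2, ·)` are not comparable and (A.3) fails.

For `|g| ≤ C` take `λ = g 1` and `w = log u`: the MPE becomes the linear recurrence
`u 1 = 1`, `u i = e^{g i - g 1} ((1 - 2^{1-i}) + 2^{1-i} u (i + 1))` for `i ≥ 2`. Unrolling it
gives a series whose `k`-th term is at most `e^{2C(k+1)} 2^{-k(k+1)/2}` uniformly in `i`, so it
converges to a bounded solution; its first term bounds `u` below by `e^{-2C}/2`, so `w` is bounded.
-/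

open MeasureTheory ProbabilityTheory

instance : MeasurableSpace ℕ+ := ⊤

/-- The `n`-step kernel `P_n`: the `n`-fold composition of `P` with itself
(`stepKernel P 0` is the identity kernel and `stepKernel P 1 = P`). -/
noncomputable def stepKernel {E : Type*} [MeasurableSpace E] (P : Kernel E E) : ℕ → Kernel E E
  | 0 => Kernel.id
  | n + 1 => (stepKernel P n) ∘ₖ P

open Finset Filter Topology Real

instance : MeasurableSingletonClass ℕ+ := ⟨fun _ => MeasurableSpace.measurableSet_top⟩

section StepKernel

variable {E : Type*} [MeasurableSpace E] (P : Kernel E E)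

instance isMarkovKernel_stepKernel [IsMarkovKernel P] (n : ℕ) :
    IsMarkovKernel (stepKernel P n) := by
  induction n with
  | zero => exact inferInstanceAs (IsMarkovKernel Kernel.id)
  | succ n ih => exact inferInstanceAs (IsMarkovKernel (stepKernel P n ∘ₖ P))

theorem stepKernel_apply_of_absorbing {x : E} (hx : P x = Measure.dirac x) (n : ℕ) :
    stepKernel P n x = Measure.dirac x := by
  induction n with
  | zero => exact Kernel.id_apply x
  | succ n ih =>
    rw [stepKernel, Kernel.comp_apply, hx, Measure.dirac_bind (Kernel.measurable _), ih]

theorem mul_stepKernel_le_stepKernel_succ [MeasurableSingletonClass E] (n : ℕ) (x z : E)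
    {B : Set E} (hB : MeasurableSet B) :
    P x {z} * stepKernel P n z B ≤ stepKernel P (n + 1) x B := by
  rw [stepKernel, Kernel.comp_apply' _ _ _ hB, mul_comm,
    ← lintegral_singleton (fun y => stepKernel P n y B)]
  exact setLIntegral_le_lintegral _ _

theorem stepKernel_pos_of_path [MeasurableSingletonClass E] {f : ℕ → E}
    (hf : ∀ k, 0 < P (f k) {f (k + 1)}) (n m : ℕ) :
    0 < stepKernel P n (f m) {f (m + n)} := by
  induction n generalizing m with
  | zero => simp [stepKernel, Kernel.id_apply]
  | succ n ih =>
    calc 0 < P (f m) {f (m + 1)} * stepKernel P n (f (m + 1)) {f (m + 1 + n)} :=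
          ENNReal.mul_pos (hf m).ne' (ih (m + 1)).ne'
      _ ≤ stepKernel P (n + 1) (f m) {f (m + (n + 1))} := by
          rw [← add_assoc, add_right_comm]
          exact mul_stepKernel_le_stepKernel_succ P n _ _ (measurableSet_singleton _)

end StepKernel

theorem summable_prod_range_of_tendsto_zero {r : ℕ → ℝ} (hr : Tendsto r atTop (𝓝 0)) :
    Summable fun k => ∏ j ∈ range k, r j := by
  refine summable_of_ratio_norm_eventually_le (r := 1 / 2) (by norm_num) ?_
  filter_upwards [hr.norm.eventually (eventually_le_nhds (by norm_num : ‖(0 : ℝ)‖ < 1 / 2))]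
    with k hk
  rw [prod_range_succ, norm_mul, mul_comm]
  exact mul_le_mul_of_nonneg_right hk (norm_nonneg _)

section ForwardRecurrence

variable (c d : ℕ → ℝ)

/-- The `k`-th term of the series solution `u m = ∑ₖ (∏_{j<k} d (m + j)) c (m + k)` of
`u m = c m + d m * u (m + 1)`. -/
noncomputable def forwardRecurrenceTerm (m k : ℕ) : ℝ :=
  (∏ j ∈ range k, d (m + j)) * c (m + k)

theorem forwardRecurrenceTerm_zero (m : ℕ) : forwardRecurrenceTerm c d m 0 = c m := by
  simp [forwardRecurrenceTerm]

theorem forwardRecurrenceTerm_succ (m k : ℕ) :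
    forwardRecurrenceTerm c d m (k + 1) = d m * forwardRecurrenceTerm c d (m + 1) k := by
  have hshift (j : ℕ) : m + (j + 1) = m + 1 + j := by omega
  rw [forwardRecurrenceTerm, forwardRecurrenceTerm, prod_range_succ', add_zero, hshift,
    prod_congr rfl fun j _ => congrArg d (hshift j)]
  ring

variable {c d}

theorem forwardRecurrenceTerm_nonneg (hc : ∀ m, 0 ≤ c m) (hd : ∀ m, 0 ≤ d m) (m k : ℕ) :
    0 ≤ forwardRecurrenceTerm c d m k :=
  mul_nonneg (prod_nonneg fun _ _ => hd _) (hc _)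

theorem forwardRecurrenceTerm_le {r : ℕ → ℝ} {C : ℝ} (hc : ∀ m, 0 ≤ c m) (hcC : ∀ m, c m ≤ C)
    (hd : ∀ m, 0 ≤ d m) (hdr : ∀ m, d m ≤ r m) (hr : Antitone r) (m k : ℕ) :
    forwardRecurrenceTerm c d m k ≤ (∏ j ∈ range k, r j) * C := by
  have hdr' : ∀ j, d (m + j) ≤ r j := fun j => (hdr _).trans (hr (Nat.le_add_left j m))
  exact mul_le_mul (prod_le_prod (fun _ _ => hd _) fun j _ => hdr' j) (hcC _) (hc _)
    (prod_nonneg fun j _ => (hd _).trans (hdr' j))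

theorem exists_bounded_forwardRecurrence_solution {r : ℕ → ℝ} {C : ℝ}
    (hc : ∀ m, 0 ≤ c m) (hcC : ∀ m, c m ≤ C) (hd : ∀ m, 0 ≤ d m) (hdr : ∀ m, d m ≤ r m)
    (hr : Antitone r) (hr0 : Tendsto r atTop (𝓝 0)) :
    ∃ u : ℕ → ℝ, (∀ m, u m = c m + d m * u (m + 1)) ∧ (∀ m, c m ≤ u m) ∧
      ∃ M, ∀ m, u m ≤ M := by
  have hmajorant := (summable_prod_range_of_tendsto_zero hr0).mul_right C
  have hsummable (m : ℕ) : Summable (forwardRecurrenceTerm c d m) :=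
    hmajorant.of_nonneg_of_le (forwardRecurrenceTerm_nonneg hc hd m)
      (forwardRecurrenceTerm_le hc hcC hd hdr hr m)
  refine ⟨fun m => ∑' k, forwardRecurrenceTerm c d m k, fun m => ?_, fun m => ?_,
    _, fun m => (hsummable m).tsum_le_tsum (forwardRecurrenceTerm_le hc hcC hd hdr hr m)
      hmajorant⟩
  · simp only [(hsummable m).tsum_eq_zero_add, forwardRecurrenceTerm_zero,
      forwardRecurrenceTerm_succ, tsum_mul_left]
  · rw [← forwardRecurrenceTerm_zero c d m]
    exact (hsummable m).le_tsum 0 fun k _ => forwardRecurrenceTerm_nonneg hc hd m k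

end ForwardRecurrence

theorem abs_log_le_of_mem_Icc {lo hi x : ℝ} (hlo : 0 < lo) (hx : x ∈ Set.Icc lo hi) :
    |log x| ≤ max (-log lo) (log hi) := by
  have hlog_lo := log_le_log hlo hx.1
  have hlog_hi := log_le_log (hlo.trans_le hx.1) hx.2
  exact abs_le.2
    ⟨by linarith [le_max_left (-log lo) (log hi)], hlog_hi.trans (le_max_right _ _)⟩

theorem log_eq_add_log_integral_exp_log {E : Type*} [MeasurableSpace E] {P : Kernel E E}
    {g u : E → ℝ} {lam : ℝ} (hu : ∀ x, 0 < u x)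
    (heigen : ∀ x, u x = exp (g x - lam) * ∫ y, u y ∂P x) (x : E) :
    log (u x) = g x - lam + log (∫ y, exp (log (u y)) ∂P x) := by
  have hint : (∫ y, exp (log (u y)) ∂P x) = ∫ y, u y ∂P x :=
    integral_congr_ae (Eventually.of_forall fun y => exp_log (hu y))
  have hint_pos : 0 < ∫ y, u y ∂P x := by
    have := hu x
    rw [heigen x] at this
    exact pos_of_mul_pos_right this (exp_pos _).le
  rw [hint, heigen x, log_mul (exp_pos _).ne' hint_pos.ne', log_exp]

def natAddTwo (m : ℕ) : ℕ+ := ⟨m + 2, Nat.succ_pos _⟩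

theorem two_le_natAddTwo (m : ℕ) : 2 ≤ natAddTwo m := by
  rw [← PNat.coe_le_coe]
  exact Nat.le_add_left 2 m

theorem natAddTwo_ne_one (m : ℕ) : natAddTwo m ≠ 1 := fun h => by
  simpa [natAddTwo] using congrArg PNat.val h

theorem natAddTwo_succ (m : ℕ) : natAddTwo (m + 1) = natAddTwo m + 1 := rfl

theorem eq_one_or_exists_eq_natAddTwo (x : ℕ+) : x = 1 ∨ ∃ m, x = natAddTwo m := by
  refine (eq_or_ne x 1).imp_right fun h => ⟨x - 2, PNat.eq ?_⟩
  have hx : (x : ℕ) ≠ 1 := fun hx => h (PNat.coe_eq_one_iff.1 hx)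
  have := x.pos
  simp only [natAddTwo, PNat.mk_coe]
  omega

theorem two_rpow_one_sub_natAddTwo (m : ℕ) :
    (2 : ℝ) ^ ((1 : ℝ) - ((natAddTwo m : ℕ) : ℝ)) = (1 / 2) ^ (m + 1) := by
  have hexp : (1 : ℝ) - ((natAddTwo m : ℕ) : ℝ) = -((m + 1 : ℕ) : ℝ) := by
    simp only [natAddTwo, PNat.mk_coe]
    push_cast
    ring
  rw [hexp, rpow_neg zero_le_two, rpow_natCast, one_div, inv_pow]

theorem exists_bounded_solution_shifted_recurrence {g : ℕ+ → ℝ} {C : ℝ}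
    (hg : ∀ x, |g x| ≤ C) :
    ∃ v : ℕ → ℝ, (∀ m, v m = exp (g (natAddTwo m) - g 1) *
        ((1 - (1 / 2) ^ (m + 1)) + (1 / 2) ^ (m + 1) * v (m + 1))) ∧
      ∃ M, ∀ m, v m ∈ Set.Icc (exp (-(2 * C)) / 2) M := by
  set a : ℕ → ℝ := fun m => exp (g (natAddTwo m) - g 1)
  have ha_le (m : ℕ) : a m ≤ exp (2 * C) :=
    exp_le_exp.2 (by linarith [abs_le.1 (hg (natAddTwo m)), abs_le.1 (hg 1)])
  have ha_ge (m : ℕ) : exp (-(2 * C)) ≤ a m :=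
    exp_le_exp.2 (by linarith [abs_le.1 (hg (natAddTwo m)), abs_le.1 (hg 1)])
  have hq_pos (m : ℕ) : 0 < (1 / 2 : ℝ) ^ (m + 1) := by positivity
  have hq (m : ℕ) : (1 / 2 : ℝ) ^ (m + 1) ≤ 1 / 2 :=
    pow_le_of_le_one (by norm_num) (by norm_num) (by omega)
  have hr_anti : Antitone fun m : ℕ => exp (2 * C) * (1 / 2 : ℝ) ^ (m + 1) := fun i j hij =>
    mul_le_mul_of_nonneg_left (pow_le_pow_of_le_one (by norm_num) (by norm_num) (by omega))
      (exp_pos _).le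
  have hr_zero : Tendsto (fun m : ℕ => exp (2 * C) * (1 / 2 : ℝ) ^ (m + 1)) atTop (𝓝 0) := by
    have hpow := tendsto_pow_atTop_nhds_zero_of_lt_one (by norm_num : (0 : ℝ) ≤ 1 / 2)
      (by norm_num)
    simpa using ((tendsto_add_atTop_iff_nat 1).2 hpow).const_mul (exp (2 * C))
  obtain ⟨v, hv_rec, hv_ge, M, hv_le⟩ := exists_bounded_forwardRecurrence_solution
    (c := fun m => a m * (1 - (1 / 2) ^ (m + 1))) (d := fun m => a m * (1 / 2) ^ (m + 1))
    (fun m => mul_nonneg (exp_pos _).le (by linarith [hq m]))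
    (fun m => (mul_le_of_le_one_right (exp_pos _).le (by linarith [hq_pos m])).trans (ha_le m))
    (fun m => mul_nonneg (exp_pos _).le (hq_pos m).le)
    (fun m => mul_le_mul_of_nonneg_right (ha_le m) (hq_pos m).le)
    hr_anti hr_zero
  refine ⟨v, fun m => by rw [hv_rec]; ring, M, fun m => ⟨?_, hv_le m⟩⟩
  calc exp (-(2 * C)) / 2 ≤ a m * (1 - (1 / 2) ^ (m + 1)) := by
        nlinarith [ha_ge m, hq m, exp_pos (-(2 * C))]
    _ ≤ v m := hv_ge m

section CounterexampleKernel

variable {P : Kernel ℕ+ ℕ+}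
  (hPi : ∀ i : ℕ+, 2 ≤ i →
    P i = ENNReal.ofReal (1 - (2 : ℝ) ^ ((1 : ℝ) - (i : ℝ))) • Measure.dirac 1
      + ENNReal.ofReal ((2 : ℝ) ^ ((1 : ℝ) - (i : ℝ))) • Measure.dirac (i + 1))
include hPi

theorem apply_natAddTwo (m : ℕ) :
    P (natAddTwo m) = ENNReal.ofReal (1 - (1 / 2) ^ (m + 1)) • Measure.dirac 1
      + ENNReal.ofReal ((1 / 2) ^ (m + 1)) • Measure.dirac (natAddTwo (m + 1)) := by
  rw [hPi _ (two_le_natAddTwo m), two_rpow_one_sub_natAddTwo, natAddTwo_succ]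

theorem apply_natAddTwo_singleton_succ_pos (m : ℕ) :
    0 < P (natAddTwo m) {natAddTwo (m + 1)} := by
  rw [apply_natAddTwo hPi]
  simp

theorem integral_apply_natAddTwo (f : ℕ+ → ℝ) (m : ℕ) :
    ∫ y, f y ∂P (natAddTwo m) =
      (1 - (1 / 2) ^ (m + 1)) * f 1 + (1 / 2) ^ (m + 1) * f (natAddTwo (m + 1)) := by
  have hq : (1 / 2 : ℝ) ^ (m + 1) ≤ 1 := pow_le_one₀ (by norm_num) (by norm_num)
  rw [apply_natAddTwo hPi,
    integral_add_measure ((integrable_dirac (by simp)).smul_measure ENNReal.ofReal_ne_top)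
      ((integrable_dirac (by simp)).smul_measure ENNReal.ofReal_ne_top),
    integral_smul_measure, integral_smul_measure, integral_dirac, integral_dirac,
    ENNReal.toReal_ofReal (by linarith), ENNReal.toReal_ofReal (by positivity), smul_eq_mul,
    smul_eq_mul]

theorem exists_bounded_eigenfunction (hP1 : P 1 = Measure.dirac 1) {g : ℕ+ → ℝ} {C : ℝ}
    (hg : ∀ x, |g x| ≤ C) :
    ∃ u : ℕ+ → ℝ, (∃ lo hi, 0 < lo ∧ ∀ x, u x ∈ Set.Icc lo hi) ∧
      ∀ x, u x = exp (g x - g 1) * ∫ y, u y ∂P x := by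
  obtain ⟨v, hv_rec, M, hv_mem⟩ := exists_bounded_solution_shifted_recurrence hg
  let u : ℕ+ → ℝ := fun x => if x = 1 then 1 else v (x - 2)
  have hu_one : u 1 = 1 := if_pos rfl
  have hu_natAddTwo (m : ℕ) : u (natAddTwo m) = v m := by
    simp only [u, if_neg (natAddTwo_ne_one m)]
    rfl
  refine ⟨u, ⟨min 1 (exp (-(2 * C)) / 2), max 1 M, by positivity, fun x => ?_⟩, fun x => ?_⟩
  · rcases eq_one_or_exists_eq_natAddTwo x with rfl | ⟨m, rfl⟩
    · rw [hu_one]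
      exact ⟨min_le_left _ _, le_max_left _ _⟩
    · rw [hu_natAddTwo]
      exact ⟨(min_le_right _ _).trans (hv_mem _).1, (hv_mem _).2.trans (le_max_right _ _)⟩
  · rcases eq_one_or_exists_eq_natAddTwo x with rfl | ⟨m, rfl⟩
    · rw [hP1, integral_dirac, hu_one, sub_self, exp_zero, one_mul]
    · rw [integral_apply_natAddTwo hPi, hu_one, hu_natAddTwo, hu_natAddTwo, hv_rec, mul_one]

end CounterexampleKernel

/-- On `E = {1, 2, 3, …}`, let `P(1,·) = δ₁` and `P(i,·) = (1 - 2^{1-i}) δ₁ + 2^{1-i} δ_{i+1}`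
for `i ≥ 2`. Then (i) for every `n ≥ 1` one has `P_n(1,{n+2}) = 0` while `P_n(2,{n+2}) > 0`,
so the strong mixing condition (A.3) fails for every `n ≥ 1` and every `L`; and (ii)
nevertheless a bounded MPE solution exists for every bounded `g`. -/
theorem mpe_exists_without_strong_mixing
    (P : Kernel ℕ+ ℕ+) [IsMarkovKernel P]
    (hP1 : P 1 = Measure.dirac 1)
    (hPi : ∀ i : ℕ+, 2 ≤ i →
      P i = ENNReal.ofReal (1 - (2 : ℝ) ^ ((1 : ℝ) - (i : ℝ))) • Measure.dirac 1
        + ENNReal.ofReal ((2 : ℝ) ^ ((1 : ℝ) - (i : ℝ))) • Measure.dirac (i + 1)) :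
    (∀ n : ℕ, 1 ≤ n →
      (stepKernel P n) 1 {(⟨n + 2, by omega⟩ : ℕ+)} = 0 ∧
      0 < (stepKernel P n) 2 {(⟨n + 2, by omega⟩ : ℕ+)} ∧
      ∀ L : ℝ, ¬ (∀ x x' : ℕ+, ∀ B : Set ℕ+,
        ((stepKernel P n) x B).toReal ≤ L * ((stepKernel P n) x' B).toReal)) ∧
    (∀ g : ℕ+ → ℝ, (∃ Cg : ℝ, ∀ x, |g x| ≤ Cg) →
      ∃ (w : ℕ+ → ℝ) (lam : ℝ), (∃ C : ℝ, ∀ x, |w x| ≤ C) ∧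
        ∀ x : ℕ+, w x = g x - lam + Real.log (∫ y, Real.exp (w y) ∂(P x))) := by
  refine ⟨fun n _ => ?_, fun g ⟨C, hg⟩ => ?_⟩
  · have hzero : stepKernel P n 1 {natAddTwo n} = 0 := by
      rw [stepKernel_apply_of_absorbing P hP1, Measure.dirac_apply,
        Set.indicator_of_notMem (Set.notMem_singleton_iff.2 (natAddTwo_ne_one n).symm)]
    have hpos : 0 < stepKernel P n 2 {natAddTwo n} := by
      have h := stepKernel_pos_of_path P (apply_natAddTwo_singleton_succ_pos hPi) n 0
      rwa [zero_add] at h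
    refine ⟨hzero, hpos, fun L hL => ?_⟩
    have hmix := hL 2 1 {natAddTwo n}
    rw [hzero, ENNReal.toReal_zero, mul_zero] at hmix
    exact hmix.not_gt (ENNReal.toReal_pos hpos.ne' (measure_ne_top _ _))
  · obtain ⟨u, ⟨lo, hi, hlo, hu_mem⟩, heigen⟩ := exists_bounded_eigenfunction hPi hP1 hg
    exact ⟨fun x => log (u x), g 1, ⟨_, fun x => abs_log_le_of_mem_Icc hlo (hu_mem x)⟩,
      log_eq_add_log_integral_exp_log (fun x => hlo.trans_le (hu_mem x).1) heigen⟩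
end

section
/- Let P be a Markov kernel on a measurable space E and, for x ∈ E, let ℙ_x denote the law on E^ℕ of the Markov chain (x₀ = x, x₁, x₂, …) with transition kernel P (the Ionescu–Tulcea trajectory measure), with E_x the corresponding expectation. Let g : E → ℝ be bounded measurable with 0 ≤ g ≤ 1 and let ν be a probability measure on E with ∫_E g dν < 1. Suppose there exists x ∈ E such that for every ε > 0 there exist p > 0 and N ∈ ℕ with ℙ_x[ |(1/k)·Σ_{i=0}^{k−1} g(x_i) − ∫_E g dν| ≥ ε ] ≤ e^{−kp} for all k ≥ N. Then limsup_{k→∞} (1/k)·log E_x[ exp(Σ_{i=0}^{k−1} g(x_i)) ] < 1. -/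
open MeasureTheory ProbabilityTheory Filter Topology

/-! Write `Sₖ = ∑_{i<k} g(xᵢ)` and `m = ∫ g dν`. Off the deviation event `{|Sₖ/k - m| ≥ ε}`
one has `exp Sₖ ≤ exp (k (m + ε))`, and on it `exp Sₖ ≤ exp k` since `g ≤ 1`; the event has
probability at most `exp (-k p)`. Hence
`E_x[exp Sₖ] ≤ 2 exp (k max (m + ε) (1 - p))`, and with `ε = (1 - m)/2` the exponential rate
`max ((1 + m)/2) (1 - p)` is below `1`. -/

section Deviation

variable {Ω : Type*} [MeasurableSpace Ω] {μ : Measure Ω}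

theorem integrable_exp_of_le [IsFiniteMeasure μ] {S : Ω → ℝ} (hS : Measurable S) {t : ℝ}
    (hSt : ∀ ω, S ω ≤ t) : Integrable (fun ω => Real.exp (S ω)) μ :=
  .of_bound (by fun_prop) (Real.exp t) <| .of_forall fun ω => by
    simpa [abs_of_pos (Real.exp_pos _)] using hSt ω

theorem integral_le_add_mul_measureReal [IsProbabilityMeasure μ] {f : Ω → ℝ} {B : Set Ω}
    {a b : ℝ} (hf : Integrable f μ) (hB : MeasurableSet B) (hb : 0 ≤ b)
    (hfa : ∀ ω, f ω ≤ a) (hfb : ∀ ω ∉ B, f ω ≤ b) :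
    ∫ ω, f ω ∂μ ≤ b + a * μ.real B := by
  have hind : Integrable (B.indicator fun _ => a) μ :=
    (integrable_indicator_iff hB).2 (integrableOn_const (measure_ne_top _ _))
  have hpt : ∀ ω, f ω ≤ b + B.indicator (fun _ => a) ω := by
    intro ω
    by_cases hω : ω ∈ B
    · simpa [hω] using (hfa ω).trans (le_add_of_nonneg_left hb)
    · simpa [hω] using hfb ω hω
  calc ∫ ω, f ω ∂μ ≤ ∫ ω, (b + B.indicator (fun _ => a) ω) ∂μ :=
        integral_mono hf ((integrable_const b).add hind) hpt
    _ = b + a * μ.real B := by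
        rw [integral_add (integrable_const b) hind, integral_const, integral_indicator_const _ hB]
        simp [mul_comm]

variable [IsProbabilityMeasure μ] {S : Ω → ℝ} {t m ε p : ℝ}

theorem integral_exp_le_of_measureReal_deviation_le (hS : Measurable S) (ht : 0 < t)
    (hSt : ∀ ω, S ω ≤ t)
    (hdev : μ.real {ω | ε ≤ |(1 / t) * S ω - m|} ≤ Real.exp (-t * p)) :
    ∫ ω, Real.exp (S ω) ∂μ ≤ 2 * Real.exp (t * max (m + ε) (1 - p)) := by
  set c := max (m + ε) (1 - p)
  have hB : MeasurableSet {ω | ε ≤ |(1 / t) * S ω - m|} :=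
    measurableSet_le measurable_const (by fun_prop)
  have hoff : ∀ ω ∉ {ω | ε ≤ |(1 / t) * S ω - m|}, Real.exp (S ω) ≤ Real.exp (t * c) := by
    intro ω hω
    have hmean : (1 / t) * S ω < m + ε := by
      linarith [le_abs_self ((1 / t) * S ω - m), not_le.1 (show ¬ε ≤ _ from hω)]
    refine Real.exp_le_exp.2 ?_
    calc S ω = t * ((1 / t) * S ω) := by field_simp
      _ ≤ t * c := mul_le_mul_of_nonneg_left (hmean.le.trans (le_max_left _ _)) ht.le
  have hon : Real.exp t * Real.exp (-t * p) ≤ Real.exp (t * c) := by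
    rw [← Real.exp_add]
    exact Real.exp_le_exp.2 (by nlinarith [le_max_right (m + ε) (1 - p)])
  calc ∫ ω, Real.exp (S ω) ∂μ
      ≤ Real.exp (t * c) + Real.exp t * μ.real {ω | ε ≤ |(1 / t) * S ω - m|} :=
        integral_le_add_mul_measureReal (integrable_exp_of_le hS hSt) hB (Real.exp_pos _).le
          (fun ω => Real.exp_le_exp.2 (hSt ω)) hoff
    _ ≤ Real.exp (t * c) + Real.exp t * Real.exp (-t * p) := by gcongr
    _ ≤ 2 * Real.exp (t * c) := by linarith

theorem one_div_mul_log_integral_exp_le (hS : Measurable S) (ht : 0 < t)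
    (hSt : ∀ ω, S ω ≤ t)
    (hdev : μ.real {ω | ε ≤ |(1 / t) * S ω - m|} ≤ Real.exp (-t * p)) :
    (1 / t) * Real.log (∫ ω, Real.exp (S ω) ∂μ) ≤ Real.log 2 / t + max (m + ε) (1 - p) := by
  have hlog : Real.log (∫ ω, Real.exp (S ω) ∂μ) ≤ Real.log 2 + t * max (m + ε) (1 - p) := by
    have := Real.log_le_log (integral_exp_pos (integrable_exp_of_le hS hSt))
      (integral_exp_le_of_measureReal_deviation_le hS ht hSt hdev)
    rwa [Real.log_mul two_ne_zero (Real.exp_ne_zero _), Real.log_exp] at this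
  calc (1 / t) * Real.log (∫ ω, Real.exp (S ω) ∂μ)
      ≤ (1 / t) * (Real.log 2 + t * max (m + ε) (1 - p)) := by gcongr
    _ = Real.log 2 / t + max (m + ε) (1 - p) := by field_simp

theorem log_integral_exp_nonneg (hS : Measurable S) (hS0 : ∀ ω, 0 ≤ S ω)
    (hSt : ∀ ω, S ω ≤ t) : 0 ≤ Real.log (∫ ω, Real.exp (S ω) ∂μ) := by
  refine Real.log_nonneg ?_
  calc (1 : ℝ) = ∫ _ω, (1 : ℝ) ∂μ := by simp
    _ ≤ ∫ ω, Real.exp (S ω) ∂μ :=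
        integral_mono (integrable_const 1) (integrable_exp_of_le hS hSt)
          fun ω => Real.one_le_exp (hS0 ω)

end Deviation

theorem limsup_le_of_eventually_le_div_add {f : ℕ → ℝ} (hf : IsBoundedUnder (· ≥ ·) atTop f)
    {C c : ℝ} (h : ∀ᶠ k in atTop, f k ≤ C / k + c) : limsup f atTop ≤ c := by
  have hlim : Tendsto (fun k : ℕ => C / k + c) atTop (𝓝 c) := by
    simpa using (tendsto_const_div_atTop_nhds_zero_nat C).add_const c
  calc limsup f atTop ≤ limsup (fun k : ℕ => C / k + c) atTop :=
        limsup_le_limsup h hf.isCoboundedUnder_le hlim.isBoundedUnder_le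
    _ = c := hlim.limsup_eq

theorem entropy_rate_lt_one_of_concentration_general {E : Type*} [MeasurableSpace E]
    (traj : E → Measure (ℕ → E)) (htraj_prob : ∀ x, IsProbabilityMeasure (traj x))
    (g : E → ℝ) (hg_meas : Measurable g)
    (hg_nonneg : ∀ y, 0 ≤ g y) (hg_le_one : ∀ y, g y ≤ 1)
    (ν : Measure E) (hν : ∫ y, g y ∂ν < 1)
    (x : E)
    (hconc : ∀ ε : ℝ, 0 < ε → ∃ p : ℝ, 0 < p ∧ ∃ N : ℕ, ∀ k : ℕ, N ≤ k →
      ((traj x) {ω : ℕ → E |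
          ε ≤ |(1 / (k : ℝ)) * (∑ i ∈ Finset.range k, g (ω i)) - ∫ y, g y ∂ν|}).toReal
        ≤ Real.exp (-(k : ℝ) * p)) :
    Filter.limsup
      (fun k : ℕ => (1 / (k : ℝ)) *
        Real.log (∫ ω : ℕ → E, Real.exp (∑ i ∈ Finset.range k, g (ω i)) ∂(traj x)))
      Filter.atTop < 1 := by
  have := htraj_prob x
  set m := ∫ y, g y ∂ν
  obtain ⟨p, hp, N, hN⟩ := hconc ((1 - m) / 2) (by linarith)
  have hS : ∀ k, Measurable fun ω : ℕ → E => ∑ i ∈ Finset.range k, g (ω i) := by fun_prop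
  have hS0 : ∀ k (ω : ℕ → E), 0 ≤ ∑ i ∈ Finset.range k, g (ω i) :=
    fun k ω => Finset.sum_nonneg fun i _ => hg_nonneg _
  have hSk : ∀ k (ω : ℕ → E), ∑ i ∈ Finset.range k, g (ω i) ≤ k :=
    fun k ω => (Finset.sum_le_sum fun i _ => hg_le_one (ω i)).trans (by simp)
  have hrate : max (m + (1 - m) / 2) (1 - p) < 1 := max_lt (by linarith) (by linarith)
  refine (limsup_le_of_eventually_le_div_add (C := Real.log 2) ?_ ?_).trans_lt hrate
  · exact isBoundedUnder_of_eventually_ge <| .of_forall fun k =>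
      mul_nonneg (by positivity) (log_integral_exp_nonneg (hS k) (hS0 k) (hSk k))
  · filter_upwards [eventually_ge_atTop (max N 1)] with k hk
    exact one_div_mul_log_integral_exp_le (hS k) (by exact_mod_cast (le_of_max_le_right hk))
      (hSk k) (hN k (le_of_max_le_left hk))

/-- If `traj x` is the Ionescu–Tulcea trajectory law of the Markov chain with kernel `P`
started at `x` (characterized by the recursion
`traj x = ∫ P(x,dy) [law of (x, ω₀, ω₁, …) with ω ~ traj y]`), `0 ≤ g ≤ 1`, `∫ g dν < 1`,
and the empirical means of `g` concentrate exponentially around `∫ g dν` under `ℙ_x`, then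
`limsup_k (1/k) log E_x[exp(Σ_{i<k} g(x_i))] < 1`. -/
theorem entropy_rate_lt_one_of_concentration {E : Type*} [MeasurableSpace E]
    (P : Kernel E E) [IsMarkovKernel P]
    (traj : E → Measure (ℕ → E)) (htraj_prob : ∀ x, IsProbabilityMeasure (traj x))
    (htraj : ∀ x : E, traj x
      = (P x).bind fun y =>
          (traj y).map (fun ω => fun n => Nat.casesOn n x (fun m => ω m)))
    (g : E → ℝ) (hg_meas : Measurable g)
    (hg_nonneg : ∀ y, 0 ≤ g y) (hg_le_one : ∀ y, g y ≤ 1)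
    (ν : Measure E) [IsProbabilityMeasure ν] (hν : ∫ y, g y ∂ν < 1)
    (x : E)
    (hconc : ∀ ε : ℝ, 0 < ε → ∃ p : ℝ, 0 < p ∧ ∃ N : ℕ, ∀ k : ℕ, N ≤ k →
      ((traj x) {ω : ℕ → E |
          ε ≤ |(1 / (k : ℝ)) * (∑ i ∈ Finset.range k, g (ω i)) - ∫ y, g y ∂ν|}).toReal
        ≤ Real.exp (-(k : ℝ) * p)) :
    Filter.limsup
      (fun k : ℕ => (1 / (k : ℝ)) *
        Real.log (∫ ω : ℕ → E, Real.exp (∑ i ∈ Finset.range k, g (ω i)) ∂(traj x)))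
      Filter.atTop < 1 :=
  entropy_rate_lt_one_of_concentration_general traj htraj_prob g hg_meas hg_nonneg hg_le_one ν hν x
    hconc
end

section
/- Let P be a Markov kernel on a measurable space E, let A ⊆ E be measurable, and let g : E → ℝ be bounded measurable with 0 ≤ g ≤ 1 and g(x) = 0 for every x ∈ A. Suppose (w, λ) is a bounded MPE solution for g with λ = 1. Then for every x ∈ E and every n ≥ 1, E_x[ exp( −Σ_{i=0}^{n−1} 𝟙_A(x_i) ) ] ≥ e^{w(x) − ‖w‖}, where E_x is the expectation for the chain started at x. Consequently, under the trajectory measure ℙ_x, the total number of visits of the chain to A is finite with positive probability: ℙ_x[ Σ_{i=0}^{∞} 𝟙_A(x_i) < ∞ ] > 0 for every x ∈ E. -/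
/-!
With `λ = 1` the MPE reads `e^{g-1} · P(e^w) = e^w`, so
`Mₙ = exp (∑_{i<n} (g(xᵢ) - 1) + w(xₙ))` is a martingale under `ℙ_x` with mean `e^{w(x)}`.
Since `g - 1 ≤ -𝟙_A` and `w ≤ ‖w‖`, `Mₙ ≤ exp (‖w‖ - ∑_{i<n} 𝟙_A(xᵢ))`, which is the bound.
If the chain visited `A` infinitely often almost surely, `exp (-∑_{i<n} 𝟙_A(xᵢ)) → 0` a.s., and
by dominated convergence so would its expectation, against the positive lower bound.
-/

open MeasureTheory ProbabilityTheory Filter Finset Real Topology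
open scoped ENNReal

theorem MeasureTheory.Measure.lintegral_bind_map_of_ne_zero {α β γ : Type*}
    [MeasurableSpace α] [MeasurableSpace β] [MeasurableSpace γ]
    {ν : Measure α} {κ : α → Measure β} {f : β → γ} (hf : Measurable f)
    (hne : ν.bind (fun a => (κ a).map f) ≠ 0) {F : γ → ℝ≥0∞} (hF : Measurable F) :
    ∫⁻ z, F z ∂ν.bind (fun a => (κ a).map f) = ∫⁻ a, ∫⁻ y, F (f y) ∂κ a ∂ν := by
  -- `bind` returns `0` when its kernel is not a.e.-measurable.
  have hκ : AEMeasurable (fun a => (κ a).map f) ν := by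
    by_contra h
    exact hne (by rw [Measure.bind, Measure.map_of_not_aemeasurable h, Measure.join_zero])
  rw [Measure.lintegral_bind hκ hF.aemeasurable]
  exact lintegral_congr fun a => lintegral_map hF hf

section Sequences

variable {E : Type*}

def seqCons (x : E) (ω : ℕ → E) : ℕ → E := fun n => Nat.casesOn n x ω

@[simp] lemma seqCons_zero (x : E) (ω : ℕ → E) : seqCons x ω 0 = x := rfl

@[simp] lemma seqCons_succ (x : E) (ω : ℕ → E) (n : ℕ) : seqCons x ω (n + 1) = ω n := rfl

lemma sum_indicator_one_eq_count (A : Set E) [DecidablePred (· ∈ A)] (ω : ℕ → E) (n : ℕ) :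
    ∑ i ∈ range n, A.indicator (fun _ => (1 : ℝ)) (ω i) = Nat.count (fun i => ω i ∈ A) n := by
  simp [Set.indicator_apply, Nat.count_eq_card_filter_range]

lemma tendsto_sum_indicator_one_atTop {A : Set E} {ω : ℕ → E} (h : {i | ω i ∈ A}.Infinite) :
    Tendsto (fun n => ∑ i ∈ range n, A.indicator (fun _ => (1 : ℝ)) (ω i)) atTop atTop := by
  classical
  simp only [sum_indicator_one_eq_count]
  refine (tendsto_natCast_atTop_atTop (R := ℝ)).comp ?_
  exact (Nat.count_monotone _).tendsto_atTop_atTop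
    fun k => ⟨Nat.nth _ k, (Nat.count_nth_of_infinite h k).ge⟩

lemma norm_exp_neg_sum_indicator_one_le_one (A : Set E) (ω : ℕ → E) (n : ℕ) :
    ‖exp (-∑ i ∈ range n, A.indicator (fun _ => (1 : ℝ)) (ω i))‖ ≤ 1 := by
  rw [norm_of_nonneg (exp_pos _).le, exp_le_one_iff, neg_nonpos]
  exact sum_nonneg fun i _ => Set.indicator_nonneg (fun _ _ => zero_le_one) _

lemma prod_ofReal_exp_sub_one_mul_le_exp_neg_visits {A : Set E} {g w : E → ℝ}
    (hg_le_one : ∀ y, g y ≤ 1) (hgA : ∀ y ∈ A, g y = 0) {M : ℝ} (hwM : ∀ y, w y ≤ M)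
    (ω : ℕ → E) (n : ℕ) :
    (∏ i ∈ range n, ENNReal.ofReal (exp (g (ω i) - 1))) * ENNReal.ofReal (exp (w (ω n)))
      ≤ ENNReal.ofReal (exp M)
        * ENNReal.ofReal (exp (-∑ i ∈ range n, A.indicator (fun _ => (1 : ℝ)) (ω i))) := by
  have hsum : ∑ i ∈ range n, (g (ω i) - 1)
      ≤ -∑ i ∈ range n, A.indicator (fun _ => (1 : ℝ)) (ω i) := by
    rw [← sum_neg_distrib]
    refine sum_le_sum fun i _ => ?_
    by_cases hi : ω i ∈ A
    · simp [hi, hgA _ hi]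
    · simp [hi, hg_le_one]
  rw [← ENNReal.ofReal_prod_of_nonneg fun i _ => (exp_pos _).le, ← exp_sum,
    ← ENNReal.ofReal_mul (exp_pos _).le, ← ENNReal.ofReal_mul (exp_pos _).le, ← exp_add,
    ← exp_add]
  exact ENNReal.ofReal_le_ofReal (exp_le_exp.2 (by linarith [hwM (ω n)]))

end Sequences

section Trajectory

variable {E : Type*} [MeasurableSpace E]

lemma measurable_seqCons (x : E) : Measurable (seqCons x) := by
  refine measurable_pi_lambda _ fun n => ?_
  cases n with
  | zero => exact measurable_const
  | succ m => exact measurable_pi_apply m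

lemma measurable_exp_neg_sum_indicator_one {A : Set E} (hA : MeasurableSet A) (n : ℕ) :
    Measurable fun ω : ℕ → E => exp (-∑ i ∈ range n, A.indicator (fun _ => (1 : ℝ)) (ω i)) :=
  measurable_exp.comp <| .neg <| Finset.measurable_sum _ fun i _ =>
    (measurable_const.indicator hA).comp (measurable_pi_apply i)

lemma tendsto_integral_exp_neg_sum_indicator_one {μ : Measure (ℕ → E)} [IsFiniteMeasure μ]
    {A : Set E} (hA : MeasurableSet A) (h : ∀ᵐ ω ∂μ, {i | ω i ∈ A}.Infinite) :
    Tendsto (fun n => ∫ ω, exp (-∑ i ∈ range n, A.indicator (fun _ => (1 : ℝ)) (ω i)) ∂μ)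
      atTop (𝓝 0) := by
  simpa using tendsto_integral_of_dominated_convergence (fun _ => 1)
    (fun n => (measurable_exp_neg_sum_indicator_one hA n).aestronglyMeasurable)
    (integrable_const 1)
    (fun n => .of_forall fun ω => norm_exp_neg_sum_indicator_one_le_one A ω n)
    (h.mono fun ω hω => tendsto_exp_neg_atTop_nhds_zero.comp (tendsto_sum_indicator_one_atTop hω))

/-- The one-step recursion characterizing the Ionescu–Tulcea laws `traj x` of the chain. -/
def IsTrajectoryLaw (P : Kernel E E) (traj : E → Measure (ℕ → E)) : Prop :=
  ∀ x, traj x = (P x).bind fun y => (traj y).map (seqCons x)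

variable {P : Kernel E E} {traj : E → Measure (ℕ → E)}

lemma IsTrajectoryLaw.lintegral_eq (htraj : IsTrajectoryLaw P traj) (x : E) [NeZero (traj x)]
    {F : (ℕ → E) → ℝ≥0∞} (hF : Measurable F) :
    ∫⁻ ω, F ω ∂traj x = ∫⁻ y, ∫⁻ ω, F (seqCons x ω) ∂traj y ∂P x := by
  have hne : (P x).bind (fun y => (traj y).map (seqCons x)) ≠ 0 := htraj x ▸ NeZero.ne _
  rw [htraj x]
  exact Measure.lintegral_bind_map_of_ne_zero (measurable_seqCons x) hne hF

/-- The process `(∏_{i<n} ρ(xᵢ)) φ(xₙ)` is a martingale; this is its mean. -/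
theorem IsTrajectoryLaw.lintegral_prod_mul_eq [IsMarkovKernel P]
    [∀ x, IsProbabilityMeasure (traj x)] (htraj : IsTrajectoryLaw P traj)
    {ρ φ : E → ℝ≥0∞} (hρ : Measurable ρ) (hφ : Measurable φ)
    (hharm : ∀ y, ρ y * ∫⁻ z, φ z ∂P y = φ y) (n : ℕ) (x : E) :
    ∫⁻ ω, (∏ i ∈ range n, ρ (ω i)) * φ (ω n) ∂traj x = φ x := by
  have hmeas : ∀ n, Measurable fun ω : ℕ → E => (∏ i ∈ range n, ρ (ω i)) * φ (ω n) :=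
    fun n => (Finset.measurable_prod _ fun i _ => hρ.comp (measurable_pi_apply i)).mul
      (hφ.comp (measurable_pi_apply n))
  induction n generalizing x with
  | zero => rw [htraj.lintegral_eq x (hmeas 0)]; simp
  | succ n ih =>
    calc ∫⁻ ω, (∏ i ∈ range (n + 1), ρ (ω i)) * φ (ω (n + 1)) ∂traj x
        = ∫⁻ y, ρ x * ∫⁻ ω, (∏ i ∈ range n, ρ (ω i)) * φ (ω n) ∂traj y ∂P x := by
          rw [htraj.lintegral_eq x (hmeas _)]
          refine lintegral_congr fun y => ?_
          rw [← lintegral_const_mul _ (hmeas n)]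
          refine lintegral_congr fun ω => ?_
          simp only [prod_range_succ', seqCons_succ, seqCons_zero]
          ring
      _ = φ x := by simp only [ih, lintegral_const_mul _ hφ, hharm]

def IsMPESolution (P : Kernel E E) (g w : E → ℝ) (lam : ℝ) : Prop :=
  ∀ y, w y = g y - lam + log (∫ z, exp (w z) ∂P y)

lemma IsMPESolution.ofReal_exp_mul_lintegral [IsMarkovKernel P] {g w : E → ℝ} {lam : ℝ}
    (hMPE : IsMPESolution P g w lam) (hw : Measurable w) {C : ℝ} (hC : ∀ y, |w y| ≤ C)
    (y : E) :
    ENNReal.ofReal (exp (g y - lam)) * ∫⁻ z, ENNReal.ofReal (exp (w z)) ∂P y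
      = ENNReal.ofReal (exp (w y)) := by
  have hint : Integrable (fun z => exp (w z)) (P y) :=
    .of_bound (by fun_prop) (exp C) <| .of_forall fun z => by
      rw [norm_of_nonneg (exp_pos _).le, exp_le_exp]
      exact (le_abs_self _).trans (hC z)
  rw [← ofReal_integral_eq_lintegral_ofReal hint (.of_forall fun z => (exp_pos _).le),
    ← ENNReal.ofReal_mul (exp_pos _).le, ← exp_log (integral_exp_pos hint), ← exp_add,
    ← hMPE y]

theorem IsTrajectoryLaw.exp_sub_iSup_abs_le_integral_exp_neg_visits [IsMarkovKernel P]
    [∀ x, IsProbabilityMeasure (traj x)] (htraj : IsTrajectoryLaw P traj)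
    {A : Set E} (hA : MeasurableSet A) {g w : E → ℝ} (hg : Measurable g)
    (hg_le_one : ∀ y, g y ≤ 1) (hgA : ∀ y ∈ A, g y = 0) (hw : Measurable w) {C : ℝ}
    (hC : ∀ y, |w y| ≤ C) (hMPE : IsMPESolution P g w 1) (x : E) (n : ℕ) :
    exp (w x - ⨆ y, |w y|)
      ≤ ∫ ω, exp (-∑ i ∈ range n, A.indicator (fun _ => (1 : ℝ)) (ω i)) ∂traj x := by
  set M := ⨆ y, |w y|
  set S := fun ω : ℕ → E => ∑ i ∈ range n, A.indicator (fun _ => (1 : ℝ)) (ω i)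
  have hint : Integrable (fun ω => exp (-S ω)) (traj x) :=
    .of_bound (measurable_exp_neg_sum_indicator_one hA n).aestronglyMeasurable 1
      (.of_forall fun ω => norm_exp_neg_sum_indicator_one_le_one A ω n)
  have hwM : ∀ y, w y ≤ M := fun y =>
    (le_abs_self _).trans (le_ciSup ⟨C, Set.forall_mem_range.2 hC⟩ y)
  have key : ENNReal.ofReal (exp (w x)) ≤ ENNReal.ofReal (exp M * ∫ ω, exp (-S ω) ∂traj x) :=
    calc ENNReal.ofReal (exp (w x))
        = ∫⁻ ω, (∏ i ∈ range n, ENNReal.ofReal (exp (g (ω i) - 1)))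
            * ENNReal.ofReal (exp (w (ω n))) ∂traj x :=
          (htraj.lintegral_prod_mul_eq (by fun_prop) (by fun_prop)
            (hMPE.ofReal_exp_mul_lintegral hw hC) n x).symm
      _ ≤ ∫⁻ ω, ENNReal.ofReal (exp M) * ENNReal.ofReal (exp (-S ω)) ∂traj x :=
          lintegral_mono fun ω =>
            prod_ofReal_exp_sub_one_mul_le_exp_neg_visits hg_le_one hgA hwM ω n
      _ = ENNReal.ofReal (exp M * ∫ ω, exp (-S ω) ∂traj x) := by
          rw [lintegral_const_mul' _ _ ENNReal.ofReal_ne_top,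
            ← ofReal_integral_eq_lintegral_ofReal hint (.of_forall fun ω => (exp_pos _).le),
            ← ENNReal.ofReal_mul (exp_pos _).le]
  rw [exp_sub, div_le_iff₀' (exp_pos M)]
  exact (ENNReal.ofReal_le_ofReal_iff (by positivity)).1 key

end Trajectory

theorem finite_visits_of_mpe_value_one_general {E : Type*} [MeasurableSpace E]
    (P : Kernel E E) [IsMarkovKernel P]
    (traj : E → Measure (ℕ → E)) (htraj_prob : ∀ x, IsProbabilityMeasure (traj x))
    (htraj : ∀ x : E, traj x
      = (P x).bind fun y =>
          (traj y).map (fun ω => fun n => Nat.casesOn n x (fun m => ω m)))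
    (A : Set E) (hA : MeasurableSet A)
    (g : E → ℝ) (hg_meas : Measurable g)
    (hg_le_one : ∀ y, g y ≤ 1)
    (hgA : ∀ y ∈ A, g y = 0)
    (w : E → ℝ) (hw_meas : Measurable w) (Cw : ℝ) (hw_bdd : ∀ y, |w y| ≤ Cw)
    (hMPE : ∀ y : E, w y = g y - 1 + Real.log (∫ z, Real.exp (w z) ∂(P y))) :
    (∀ x : E, ∀ n : ℕ, 1 ≤ n →
      Real.exp (w x - ⨆ y, |w y|)
        ≤ ∫ ω : ℕ → E,
            Real.exp (-(∑ i ∈ Finset.range n, Set.indicator A (fun _ => (1 : ℝ)) (ω i)))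
            ∂(traj x)) ∧
    (∀ x : E, 0 < (traj x) {ω : ℕ → E | {i : ℕ | ω i ∈ A}.Finite}) := by
  have := htraj_prob
  have hbound := IsTrajectoryLaw.exp_sub_iSup_abs_le_integral_exp_neg_visits htraj hA
    hg_meas hg_le_one hgA hw_meas hw_bdd hMPE
  refine ⟨fun x n _ => hbound x n, fun x => pos_iff_ne_zero.2 fun hfin => ?_⟩
  have hinf : ∀ᵐ ω ∂traj x, {i | ω i ∈ A}.Infinite := measure_eq_zero_iff_ae_notMem.1 hfin
  exact (exp_pos _).not_ge <| ge_of_tendsto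
    (tendsto_integral_exp_neg_sum_indicator_one hA hinf) (.of_forall (hbound x))

/-- If `traj x` is the Ionescu–Tulcea trajectory law of the Markov chain with kernel `P`
started at `x` (characterized by the recursion
`traj x = ∫ P(x,dy) [law of (x, ω₀, ω₁, …) with ω ~ traj y]`), `0 ≤ g ≤ 1` with `g = 0` on
`A`, and `(w, lam)` is a bounded MPE solution for `g` with `lam = 1`, then for every `x`
and `n ≥ 1`, `E_x[exp(-Σ_{i<n} 𝟙_A(x_i))] ≥ e^{w(x) - ‖w‖}`; consequently the chain visits
`A` only finitely often with positive probability, from every starting point. -/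
theorem finite_visits_of_mpe_value_one {E : Type*} [MeasurableSpace E]
    (P : Kernel E E) [IsMarkovKernel P]
    (traj : E → Measure (ℕ → E)) (htraj_prob : ∀ x, IsProbabilityMeasure (traj x))
    (htraj : ∀ x : E, traj x
      = (P x).bind fun y =>
          (traj y).map (fun ω => fun n => Nat.casesOn n x (fun m => ω m)))
    (A : Set E) (hA : MeasurableSet A)
    (g : E → ℝ) (hg_meas : Measurable g)
    (hg_nonneg : ∀ y, 0 ≤ g y) (hg_le_one : ∀ y, g y ≤ 1)
    (hgA : ∀ y ∈ A, g y = 0)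
    (w : E → ℝ) (hw_meas : Measurable w) (Cw : ℝ) (hw_bdd : ∀ y, |w y| ≤ Cw)
    (hMPE : ∀ y : E, w y = g y - 1 + Real.log (∫ z, Real.exp (w z) ∂(P y))) :
    (∀ x : E, ∀ n : ℕ, 1 ≤ n →
      Real.exp (w x - ⨆ y, |w y|)
        ≤ ∫ ω : ℕ → E,
            Real.exp (-(∑ i ∈ Finset.range n, Set.indicator A (fun _ => (1 : ℝ)) (ω i)))
            ∂(traj x)) ∧
    (∀ x : E, 0 < (traj x) {ω : ℕ → E | {i : ℕ | ω i ∈ A}.Finite}) :=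
  finite_visits_of_mpe_value_one_general P traj htraj_prob htraj A hA g hg_meas hg_le_one hgA w
    hw_meas Cw hw_bdd hMPE
end

section
/- Let E = {1, 2, 3, …} and let P be the Markov kernel with P(i,·) = (1/2)·δ₁ + (1/2)·δ_{i+1} for every i ≥ 1. Fix ε > 0 and define g : E → ℝ by g(i) = 0 if i lies in some interval [2^k, 2^k + 2^{k−1}) with k ≥ 1 or i = 1, and g(i) = 2(log 2 + ε) if i lies in some interval [2^k + 2^{k−1}, 2^{k+1}) with k ≥ 1. Then P satisfies the mixing condition (A.1) with Λ = 1/2, yet there exist no bounded w : E → ℝ and λ ∈ ℝ satisfying the multiplicative Poisson equation w(x) = g(x) − λ + log ∫_E e^{w(y)} P(x,dy) for all x ∈ E. -/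
open MeasureTheory ProbabilityTheory

/-!
A bounded solution gives a positive bounded `v m = exp (w (m + 1))` with
`v m = ρ m (v 0 + v (m + 1))`, where `ρ m = exp (g (m + 1) - λ) / 2`. On the runs of states with
`g = 2 (log 2 + ε)`, which have unbounded length, `v` would otherwise decay geometrically, so
`λ ≥ log 2 + 2ε`. Since at most half of every initial segment `{1, …, N}` is such a state,
`∏_{i<N} ρ i ≤ c ^ N` with `c = exp (-ε) / 2 < 1/2`. Unfolding the recurrence gives
`v 0 = v 0 ∑_{j<N} ∏_{i≤j} ρ i + (∏_{i<N} ρ i) v N ≤ v 0 · c / (1 - c) + c ^ N sup v`, and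
`c / (1 - c) < 1` forces `v 0 = 0`.
-/

open Finset Real Filter Topology
open scoped ENNReal

lemma abs_toReal_half_add_half_sub_le {α : Type*} [MeasurableSpace α] (ν ρ ρ' : Measure α)
    [IsFiniteMeasure ν] [IsProbabilityMeasure ρ] [IsProbabilityMeasure ρ'] (B : Set α) :
    |((((1 : ℝ≥0∞) / 2) • ν + ((1 : ℝ≥0∞) / 2) • ρ) B).toReal
      - ((((1 : ℝ≥0∞) / 2) • ν + ((1 : ℝ≥0∞) / 2) • ρ') B).toReal| ≤ 1 / 2 := by
  simp only [Measure.add_apply, Measure.smul_apply, smul_eq_mul]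
  rw [ENNReal.toReal_add (by finiteness) (by finiteness),
    ENNReal.toReal_add (by finiteness) (by finiteness)]
  simp only [ENNReal.toReal_mul, ENNReal.toReal_div, ENNReal.toReal_one, ENNReal.toReal_ofNat]
  have h := measureReal_le_one (μ := ρ) (s := B)
  have h' := measureReal_le_one (μ := ρ') (s := B)
  simp only [measureReal_def] at h h'
  rw [abs_le]
  constructor <;> nlinarith [ENNReal.toReal_nonneg (a := ρ B), ENNReal.toReal_nonneg (a := ρ' B)]

lemma integral_half_dirac_add_half_dirac {α : Type*} [MeasurableSpace α]
    [MeasurableSingletonClass α] (f : α → ℝ) (a b : α) :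
    ∫ y, f y ∂(((1 : ℝ≥0∞) / 2) • Measure.dirac a + ((1 : ℝ≥0∞) / 2) • Measure.dirac b)
      = (f a + f b) / 2 := by
  have hf : ∀ x, Integrable f (((1 : ℝ≥0∞) / 2) • Measure.dirac x) := fun x =>
    (integrable_dirac enorm_lt_top).smul_measure (by simp)
  rw [integral_add_measure (hf a) (hf b), integral_smul_measure, integral_smul_measure,
    integral_dirac, integral_dirac]
  simp only [ENNReal.toReal_div, ENNReal.toReal_one, ENNReal.toReal_ofNat, smul_eq_mul]
  ring

/-- The states where `g = 2 (log 2 + ε)`: the upper halves of the dyadic blocks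
`[2^(j+1), 2^(j+2))`. -/
def IsHigh (s : ℕ) : Prop := ∃ j, 3 * 2 ^ j ≤ s ∧ s < 4 * 2 ^ j

lemma log_two_eq_succ {s j : ℕ} (h₁ : 2 * 2 ^ j ≤ s) (h₂ : s < 4 * 2 ^ j) :
    Nat.log 2 s = j + 1 :=
  Nat.log_eq_of_pow_le_of_lt_pow (by rw [pow_succ]; omega) (by rw [pow_succ, pow_succ]; omega)

lemma not_isHigh {s j : ℕ} (h₁ : 2 * 2 ^ j ≤ s) (h₂ : s < 3 * 2 ^ j) : ¬ IsHigh s := by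
  rintro ⟨j', h₁', h₂'⟩
  have hj : j' + 1 = j + 1 :=
    (log_two_eq_succ (by omega) h₂').symm.trans (log_two_eq_succ h₁ (by omega))
  cases Nat.succ_injective hj
  omega

lemma isHigh_three_mul_two_pow_add {n t : ℕ} (ht : t < 2 ^ n) : IsHigh (3 * 2 ^ n + t) :=
  ⟨n, by omega, by omega⟩

lemma exists_of_isHigh {s : ℕ} (h : IsHigh s) :
    ∃ k : ℕ, 1 ≤ k ∧ 2 ^ k + 2 ^ (k - 1) ≤ s ∧ s < 2 ^ (k + 1) := by
  obtain ⟨j, h₁, h₂⟩ := h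
  refine ⟨j + 1, by omega, ?_, ?_⟩ <;> simp only [pow_succ, Nat.add_sub_cancel] <;> omega

lemma exists_of_not_isHigh {s : ℕ} (hs : 1 ≤ s) (h : ¬ IsHigh s) :
    s = 1 ∨ ∃ k : ℕ, 1 ≤ k ∧ 2 ^ k ≤ s ∧ s < 2 ^ k + 2 ^ (k - 1) := by
  rcases hs.eq_or_lt with rfl | hs
  · exact Or.inl rfl
  obtain ⟨j, hj⟩ : ∃ j, Nat.log 2 s = j + 1 :=
    Nat.exists_eq_add_one.2 (Nat.log_pos one_lt_two hs)
  have h₁ : 2 ^ (j + 1) ≤ s := hj ▸ Nat.pow_log_le_self 2 (by omega)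
  have h₂ : s < 2 ^ (j + 1 + 1) := hj ▸ Nat.lt_pow_succ_log_self one_lt_two s
  refine Or.inr ⟨j + 1, by omega, h₁, ?_⟩
  simp only [pow_succ, Nat.add_sub_cancel] at h₁ h₂ ⊢
  exact not_le.1 fun h₃ => h ⟨j, by omega, by omega⟩

open Classical in
lemma two_mul_card_filter_isHigh_le (N : ℕ) : 2 * #{i ∈ range N | IsHigh (i + 1)} ≤ N := by
  have hinj : #{i ∈ range N | IsHigh (i + 1)} ≤ #{i ∈ range N | ¬ IsHigh (i + 1)} := by
    -- `i ↦ i - 2^j` maps the upper half of the block `[2^(j+1), 2^(j+2))` into its lower half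
    refine card_le_card_of_injOn (fun i => i - 2 ^ (Nat.log 2 (i + 1) - 1)) ?_ ?_
    · rintro i hi
      simp only [coe_filter, mem_range, Set.mem_ofPred_eq] at hi ⊢
      obtain ⟨hiN, j, h₁, h₂⟩ := hi
      rw [log_two_eq_succ (by omega) h₂, Nat.add_sub_cancel]
      exact ⟨by omega, not_isHigh (j := j) (by omega) (by omega)⟩
    · rintro i hi i' hi' h
      simp only [coe_filter, mem_range, Set.mem_ofPred_eq] at hi hi' h
      obtain ⟨-, j, h₁, h₂⟩ := hi
      obtain ⟨-, j', h₁', h₂'⟩ := hi'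
      rw [log_two_eq_succ (by omega) h₂, log_two_eq_succ (by omega) h₂', Nat.add_sub_cancel,
        Nat.add_sub_cancel] at h
      have hj : j + 1 = j' + 1 := by
        rw [← log_two_eq_succ (s := i - 2 ^ j + 1) (by omega) (by omega), h,
          log_two_eq_succ (j := j') (by omega) (by omega)]
      cases Nat.succ_injective hj
      omega
  have := card_filter_add_card_filter_not (s := range N) (fun i => IsHigh (i + 1))
  rw [card_range] at this
  omega

open Classical in
lemma sum_ite_isHigh_le {A : ℝ} (hA : 0 ≤ A) (N : ℕ) :
    ∑ i ∈ range N, (if IsHigh (i + 1) then 2 * A else 0) ≤ N * A := by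
  rw [sum_ite, sum_const, sum_const_zero, add_zero, nsmul_eq_mul]
  have : (2 * #{i ∈ range N | IsHigh (i + 1)} : ℝ) ≤ N := by
    exact_mod_cast two_mul_card_filter_isHigh_le N
  nlinarith

section Recurrence

variable {v ρ : ℕ → ℝ}

lemma eq_sum_prod_add_prod_mul {s : ℝ} (hv : ∀ m, v m = ρ m * (s + v (m + 1))) (N : ℕ) :
    v 0 = s * ∑ j ∈ range N, ∏ i ∈ range (j + 1), ρ i + (∏ i ∈ range N, ρ i) * v N := by
  induction N with
  | zero => simp
  | succ N ih => rw [ih, hv N, sum_range_succ, prod_range_succ]; ring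

lemma eq_zero_of_prod_le_pow {b c : ℝ} (hv : ∀ m, v m = ρ m * (v 0 + v (m + 1)))
    (hv₀ : ∀ m, 0 ≤ v m) (hvb : ∀ m, v m ≤ b) (hc₀ : 0 ≤ c) (hc : c < 1 / 2)
    (hρ : ∀ N, ∏ i ∈ range N, ρ i ≤ c ^ N) : v 0 = 0 := by
  have hc₁ : c < 1 := by linarith
  have hsum (N : ℕ) : ∑ j ∈ range N, ∏ i ∈ range (j + 1), ρ i ≤ c / (1 - c) :=
    calc _ ≤ ∑ j ∈ range N, c ^ (1 + j) := sum_le_sum fun j _ => add_comm j 1 ▸ hρ (j + 1)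
      _ = ∑ j ∈ Ico 1 (N + 1), c ^ j := (sum_Ico_eq_sum_range _ 1 (N + 1)).symm
      _ ≤ c ^ 1 / (1 - c) := geom_sum_Ico_le_of_lt_one hc₀ hc₁
      _ = c / (1 - c) := by rw [pow_one]
  have hbound (N : ℕ) : v 0 * (1 - c / (1 - c)) ≤ c ^ N * b := by
    have h₁ := mul_le_mul_of_nonneg_left (hsum N) (hv₀ 0)
    have h₂ := mul_le_mul (hρ N) (hvb N) (hv₀ N) (pow_nonneg hc₀ N)
    linarith [eq_sum_prod_add_prod_mul hv N]
  have hlim : Tendsto (fun N => c ^ N * b) atTop (𝓝 0) := by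
    simpa using (tendsto_pow_atTop_nhds_zero_of_lt_one hc₀ hc₁).mul_const b
  have hpos : 0 < 1 - c / (1 - c) := by
    rw [sub_pos, div_lt_one (by linarith)]
    linarith
  exact le_antisymm (nonpos_of_mul_nonpos_left (ge_of_tendsto' hlim hbound) hpos) (hv₀ 0)

lemma pow_mul_le_of_mul_le {r : ℝ} (hr : 0 ≤ r) {m n : ℕ}
    (h : ∀ t < n, r * v (m + t + 1) ≤ v (m + t)) : r ^ n * v (m + n) ≤ v m := by
  induction n with
  | zero => simp
  | succ n ih =>
    calc r ^ (n + 1) * v (m + (n + 1)) = r ^ n * (r * v (m + n + 1)) := by ring_nf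
      _ ≤ r ^ n * v (m + n) := mul_le_mul_of_nonneg_left (h n (by omega)) (pow_nonneg hr n)
      _ ≤ v m := ih fun t ht => h t (by omega)

lemma le_one_of_forall_exists_mul_le {r a b : ℝ} (ha : 0 < a) (hv : ∀ m, a ≤ v m ∧ v m ≤ b)
    (h : ∀ n, ∃ m, ∀ t < n, r * v (m + t + 1) ≤ v (m + t)) : r ≤ 1 := by
  by_contra! hr
  obtain ⟨n, hn⟩ := pow_unbounded_of_one_lt (b / a) hr
  obtain ⟨m, hm⟩ := h n
  have hpow : r ^ n * a ≤ b :=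
    calc r ^ n * a ≤ r ^ n * v (m + n) := mul_le_mul_of_nonneg_left (hv _).1 (by positivity)
      _ ≤ v m := pow_mul_le_of_mul_le (by positivity) hm
      _ ≤ b := (hv m).2
  rw [div_lt_iff₀ ha] at hn
  linarith

end Recurrence

section Exponential

variable {v a : ℕ → ℝ} {lam : ℝ}

lemma sub_log_two_le_of_recurrence {h lo hi : ℝ} (hlo : 0 < lo) (hv : ∀ m, lo ≤ v m ∧ v m ≤ hi)
    (hrec : ∀ m, v m = exp (a m - lam) / 2 * (v 0 + v (m + 1)))
    (ha : ∀ m, IsHigh (m + 1) → a m = h) : h - log 2 ≤ lam := by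
  have hr : exp (h - lam) / 2 ≤ 1 := by
    refine le_one_of_forall_exists_mul_le hlo hv fun n => ⟨3 * 2 ^ n - 1, fun t ht => ?_⟩
    have hhigh : IsHigh (3 * 2 ^ n - 1 + t + 1) := by
      have := isHigh_three_mul_two_pow_add (Nat.lt_two_pow_self.trans' ht)
      convert this using 1
      have := Nat.one_le_two_pow (n := n)
      omega
    rw [hrec (3 * 2 ^ n - 1 + t), ha _ hhigh]
    nlinarith [(hv 0).1, exp_pos (h - lam)]
  have : exp (h - lam) ≤ exp (log 2) := by rw [exp_log two_pos]; linarith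
  linarith [exp_le_exp.1 this]

lemma prod_exp_sub_div_two_le {A δ : ℝ} (hsum : ∀ N, ∑ i ∈ range N, a i ≤ N * A)
    (hlam : A + δ ≤ lam) (N : ℕ) : ∏ i ∈ range N, exp (a i - lam) / 2 ≤ (exp (-δ) / 2) ^ N := by
  rw [prod_div_distrib, ← exp_sum, prod_const, card_range, div_pow, ← exp_nat_mul]
  gcongr
  rw [sum_sub_distrib, sum_const, card_range, nsmul_eq_mul]
  nlinarith [hsum N, (Nat.cast_nonneg N : (0 : ℝ) ≤ N)]

end Exponential

theorem no_bounded_mpe_full_support_example_general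
    (P : Kernel ℕ+ ℕ+)
    (hP : ∀ i : ℕ+,
      P i = ((1 : ENNReal) / 2) • Measure.dirac 1 + ((1 : ENNReal) / 2) • Measure.dirac (i + 1))
    (ε : ℝ) (hε : 0 < ε)
    (g : ℕ+ → ℝ)
    (hg_zero : ∀ i : ℕ+,
      (i = 1 ∨ ∃ k : ℕ, 1 ≤ k ∧ 2 ^ k ≤ (i : ℕ) ∧ (i : ℕ) < 2 ^ k + 2 ^ (k - 1)) →
      g i = 0)
    (hg_high : ∀ i : ℕ+,
      (∃ k : ℕ, 1 ≤ k ∧ 2 ^ k + 2 ^ (k - 1) ≤ (i : ℕ) ∧ (i : ℕ) < 2 ^ (k + 1)) →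
      g i = 2 * (Real.log 2 + ε)) :
    (∀ B : Set ℕ+, ∀ x x' : ℕ+, |(P x B).toReal - (P x' B).toReal| ≤ 1 / 2) ∧
    ¬ ∃ (w : ℕ+ → ℝ) (lam : ℝ), (∃ C : ℝ, ∀ x, |w x| ≤ C) ∧
        ∀ x : ℕ+, w x = g x - lam + Real.log (∫ y, Real.exp (w y) ∂(P x)) := by
  classical
  refine ⟨fun B x x' => ?_, ?_⟩
  · rw [hP x, hP x']
    exact abs_toReal_half_add_half_sub_le _ _ _ B
  rintro ⟨w, lam, ⟨C, hC⟩, hw⟩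
  set L := log 2 + ε
  have hg (m : ℕ) : g m.succPNat = if IsHigh (m + 1) then 2 * L else 0 := by
    split_ifs with h
    · exact hg_high _ (exists_of_isHigh h)
    · exact hg_zero _ <|
        (exists_of_not_isHigh m.succ_pos h).imp_left fun h₁ => PNat.coe_injective h₁
  set v : ℕ → ℝ := fun m => exp (w m.succPNat)
  have hv (m : ℕ) : exp (-C) ≤ v m ∧ v m ≤ exp C :=
    ⟨exp_le_exp.2 (neg_le_of_abs_le (hC _)), exp_le_exp.2 (le_of_abs_le (hC _))⟩
  have hrec (m : ℕ) : v m = exp (g m.succPNat - lam) / 2 * (v 0 + v (m + 1)) := by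
    have h := hw m.succPNat
    rw [hP, integral_half_dirac_add_half_dirac] at h
    change exp (w _) = exp (g _ - lam) / 2 * (exp (w 1) + exp (w (m.succPNat + 1)))
    rw [h, exp_add, exp_log (by positivity)]
    ring
  have hlam : L + ε ≤ lam := by
    have := sub_log_two_le_of_recurrence (exp_pos _) hv hrec fun m h => (hg m).trans (if_pos h)
    linarith
  have hsum (N : ℕ) : ∑ i ∈ range N, g i.succPNat ≤ N * L := by
    simpa only [hg] using sum_ite_isHigh_le (by positivity) N
  have hc : exp (-ε) / 2 < 1 / 2 := by linarith [exp_lt_one_iff.2 (neg_neg_of_pos hε)]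
  exact (exp_pos _).ne' <| eq_zero_of_prod_le_pow hrec (fun m => (exp_pos _).le)
    (fun m => (hv m).2) (by positivity) hc (prod_exp_sub_div_two_le hsum hlam)

/-- On `E = {1, 2, 3, …}`, let `P(i,·) = (1/2) δ₁ + (1/2) δ_{i+1}` for every `i ≥ 1`, and,
for a fixed `ε > 0`, let `g(i) = 0` if `i = 1` or `i ∈ [2^k, 2^k + 2^{k-1})` for some
`k ≥ 1`, and `g(i) = 2(log 2 + ε)` if `i ∈ [2^k + 2^{k-1}, 2^{k+1})` for some `k ≥ 1`.
Then `P` satisfies the mixing condition (A.1) with `Λ = 1/2`, yet no bounded MPE solution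
for `g` exists. -/
theorem no_bounded_mpe_full_support_example
    (P : Kernel ℕ+ ℕ+) [IsMarkovKernel P]
    (hP : ∀ i : ℕ+,
      P i = ((1 : ENNReal) / 2) • Measure.dirac 1 + ((1 : ENNReal) / 2) • Measure.dirac (i + 1))
    (ε : ℝ) (hε : 0 < ε)
    (g : ℕ+ → ℝ)
    (hg_zero : ∀ i : ℕ+,
      (i = 1 ∨ ∃ k : ℕ, 1 ≤ k ∧ 2 ^ k ≤ (i : ℕ) ∧ (i : ℕ) < 2 ^ k + 2 ^ (k - 1)) →
      g i = 0)
    (hg_high : ∀ i : ℕ+,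
      (∃ k : ℕ, 1 ≤ k ∧ 2 ^ k + 2 ^ (k - 1) ≤ (i : ℕ) ∧ (i : ℕ) < 2 ^ (k + 1)) →
      g i = 2 * (Real.log 2 + ε)) :
    (∀ B : Set ℕ+, ∀ x x' : ℕ+, |(P x B).toReal - (P x' B).toReal| ≤ 1 / 2) ∧
    ¬ ∃ (w : ℕ+ → ℝ) (lam : ℝ), (∃ C : ℝ, ∀ x, |w x| ≤ C) ∧
        ∀ x : ℕ+, w x = g x - lam + Real.log (∫ y, Real.exp (w y) ∂(P x)) :=
  no_bounded_mpe_full_support_example_general P hP ε hε g hg_zero hg_high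
end
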